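/- arXiv:2204.04762 — 8 statements merged into one kernel-verified Lean document; each statement's English description precedes it below -/
import Mathlib

section
/- Let f : ℝ^m × ℝ^n → ℝ∪{±∞} satisfy f(ū, x) = φ(x) for all x, and suppose ȳ ∈ ℝ^m satisfies inf_x f(u,x) > inf_x f(ū,x) + ⟨ȳ, u − ū⟩ for all u ≠ ū. Then any minimizer (u⋆, x⋆) of (u,x) ↦ f(u,x) − ⟨ȳ, u − ū⟩ satisfies u⋆ = ū and x⋆ is a minimizer of φ. -/
open Filter Topology RealInnerProductSpace

/-- If `f` is a Rockafellian for minimizing `φ` with anchor `ū`, and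
`inf_x f(u,x) > inf_x f(ū,x) + ⟨ȳ, u − ū⟩` for all `u ≠ ū`, then any minimizer `(u⋆,x⋆)` of
`(u,x) ↦ f(u,x) − ⟨ȳ, u − ū⟩` satisfies `u⋆ = ū` and `x⋆` minimizes `φ`. -/
theorem stmt1 {m n : ℕ}
    (φ : EuclideanSpace ℝ (Fin n) → EReal)
    (f : EuclideanSpace ℝ (Fin m) → EuclideanSpace ℝ (Fin n) → EReal)
    (ub yb : EuclideanSpace ℝ (Fin m))
    (hRock : ∀ x, f ub x = φ x)
    (hstrict : ∀ u : EuclideanSpace ℝ (Fin m), u ≠ ub →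
      (⨅ x, f ub x) + ((⟪yb, u - ub⟫ : ℝ) : EReal) < ⨅ x, f u x)
    (us : EuclideanSpace ℝ (Fin m)) (xs : EuclideanSpace ℝ (Fin n))
    (hmin : ∀ (u : EuclideanSpace ℝ (Fin m)) (x : EuclideanSpace ℝ (Fin n)),
      f us xs - ((⟪yb, us - ub⟫ : ℝ) : EReal) ≤ f u x - ((⟪yb, u - ub⟫ : ℝ) : EReal)) :
    us = ub ∧ ∀ x, φ xs ≤ φ x := by
  have hzero : (⟪yb, ub - ub⟫ : ℝ) = 0 := by simp
  have hue : us = ub := by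
    by_contra h
    set c : ℝ := (⟪yb, us - ub⟫ : ℝ)
    have h1 : ∀ x, f us xs - (c : EReal) ≤ f ub x := by
      intro x
      have := hmin ub x
      rwa [hzero, EReal.coe_zero, sub_zero] at this
    have h2 : f us xs - (c : EReal) ≤ ⨅ x, f ub x := le_iInf h1
    have h3 : f us xs ≤ (⨅ x, f ub x) + (c : EReal) := by
      refine (EReal.sub_le_iff_le_add ?_ ?_).1 h2 <;>
        simp [EReal.coe_ne_bot, EReal.coe_ne_top]
    have h4 : (⨅ x, f ub x) + (c : EReal) < ⨅ x, f us x := hstrict us h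
    have h5 : (⨅ x, f us x) ≤ f us xs := iInf_le _ _
    exact absurd (h3.trans_lt (h4.trans_le h5)) (lt_irrefl _)
  refine ⟨hue, fun x => ?_⟩
  have := hmin ub x
  rw [hue, hzero, EReal.coe_zero, sub_zero, sub_zero, hRock, hRock] at this
  exact this
end

section
/- Suppose the min-value function v(u) := inf_x f(u,x) is convex on ℝ^m and ȳ is a subgradient of v at ū, where f is a Rockafellian for minimizing φ with anchor ū (i.e., f(ū,·) = φ). Then for every minimizer x⋆ of φ, the pair (ū, x⋆) minimizes (u,x) ↦ f(u,x) − ⟨ȳ, u − ū⟩. -/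
open Filter Topology RealInnerProductSpace

/-- If the min-value function `v(u) = inf_x f(u,x)` is convex and `ȳ` is a
(convex) subgradient of `v` at the anchor `ū` (i.e. `v(u) ≥ v(ū) + ⟨ȳ, u − ū⟩` for all `u`),
then for every minimizer `x⋆` of `φ`, `(ū, x⋆)` minimizes `(u,x) ↦ f(u,x) − ⟨ȳ, u − ū⟩`. -/
theorem stmt2 {m n : ℕ}
    (φ : EuclideanSpace ℝ (Fin n) → EReal)
    (f : EuclideanSpace ℝ (Fin m) → EuclideanSpace ℝ (Fin n) → EReal)
    (v : EuclideanSpace ℝ (Fin m) → EReal)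
    (ub yb : EuclideanSpace ℝ (Fin m))
    (hRock : ∀ x, f ub x = φ x)
    (hv : ∀ u, v u = ⨅ x, f u x)
    (hconv : ∀ u₁ u₂ : EuclideanSpace ℝ (Fin m), ∀ t ∈ Set.Icc (0:ℝ) 1,
      v (t • u₁ + (1 - t) • u₂) ≤ ((t : ℝ) : EReal) * v u₁ + (((1 - t) : ℝ) : EReal) * v u₂)
    (hsub : ∀ u : EuclideanSpace ℝ (Fin m),
      v ub + ((⟪yb, u - ub⟫ : ℝ) : EReal) ≤ v u)
    (xs : EuclideanSpace ℝ (Fin n)) (hxs : ∀ x, φ xs ≤ φ x) :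
    ∀ (u : EuclideanSpace ℝ (Fin m)) (x : EuclideanSpace ℝ (Fin n)),
      f ub xs - ((⟪yb, ub - ub⟫ : ℝ) : EReal) ≤ f u x - ((⟪yb, u - ub⟫ : ℝ) : EReal) := by
  intro u x
  have h0 : (⟪yb, ub - ub⟫ : ℝ) = 0 := by simp
  rw [h0]
  -- f ub xs = v ub
  have hveq : v ub = f ub xs := by
    rw [hv ub]
    refine le_antisymm (iInf_le _ xs) (le_iInf fun y => ?_)
    rw [hRock, hRock]; exact hxs y
  have h1 : v u ≤ f u x := by rw [hv u]; exact iInf_le _ x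
  have h2 := (hsub u).trans h1
  rw [EReal.le_sub_iff_add_le (Or.inl (EReal.coe_ne_bot _)) (Or.inl (EReal.coe_ne_top _))]
  simpa [hveq] using h2
end

section
/- Let f be a Rockafellian for minimizing φ with anchor ū, and suppose there exists θ̄ ≥ 0 with inf_x f(u,x) ≥ inf_x f(ū,x) − θ̄‖u − ū‖ for all u ∈ ℝ^m, for some norm ‖·‖ on ℝ^m. Then for every θ ≥ θ̄, the function f_θ(u,x) := f(u,x) + θ‖u − ū‖ is a Rockafellian with the same anchor that is exact for ȳ = 0: every minimizer x⋆ of φ yields a minimizer (ū, x⋆) of f_θ. Moreover, if θ > θ̄ and inf_x f(ū,x) is finite, then every minimizer (u⋆,x⋆) of f_θ satisfies u⋆ = ū and x⋆ minimizes φ. -/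
/-!
Calmness, rewritten as `inf f(ū,·) ≤ f(u,x) + θ̄‖u − ū‖`, says that every value of `f_θ` dominates
`inf φ`, which `(ū, x⋆)` attains. If `(u⋆, x⋆)` minimizes `f_θ`, then comparing with `(ū, x)` gives
`f(u⋆,x⋆) + θ‖u⋆ − ū‖ ≤ inf f(ū,·) ≤ f(u⋆,x⋆) + θ̄‖u⋆ − ū‖`; when the optimal value is finite this
forces `(θ − θ̄)‖u⋆ − ū‖ ≤ 0`, hence `u⋆ = ū`.
-/

lemma nonneg_of_subadditive_of_abs_smul {E : Type*} [AddCommGroup E] [Module ℝ E] {N : E → ℝ}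
    (hadd : ∀ u₁ u₂, N (u₁ + u₂) ≤ N u₁ + N u₂) (hsmul : ∀ (c : ℝ) u, N (c • u) = |c| * N u)
    (u : E) : 0 ≤ N u := by
  have hzero : N 0 = 0 := by simpa using hsmul 0 0
  have hneg : N (-u) = N u := by simpa using hsmul (-1) u
  have := hadd u (-u)
  rw [add_neg_cancel, hzero, hneg] at this
  linarith

lemma EReal.le_of_add_le_of_le_add {a b : EReal} {x y : ℝ} (hb_bot : b ≠ ⊥) (hb_top : b ≠ ⊤)
    (hx : a + x ≤ b) (hy : b ≤ a + y) : x ≤ y := by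
  lift b to ℝ using ⟨hb_top, hb_bot⟩
  have ha_top : a ≠ ⊤ := fun h ↦ by simp [h] at hx
  have ha_bot : a ≠ ⊥ := fun h ↦ by simp [h] at hy
  lift a to ℝ using ⟨ha_top, ha_bot⟩
  norm_cast at hx hy
  linarith

lemma iInf_le_add_of_calm {U X : Type*} [Sub U] {f : U → X → EReal} {ub : U} {N : U → ℝ}
    {θb : ℝ} (hcalm : ∀ u, (⨅ x, f ub x) - ((θb * N (u - ub) : ℝ) : EReal) ≤ ⨅ x, f u x)
    (u : U) (x : X) : ⨅ x, f ub x ≤ f u x + ((θb * N (u - ub) : ℝ) : EReal) :=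
  (EReal.sub_le_iff_le_add (.inl (EReal.coe_ne_bot _)) (.inl (EReal.coe_ne_top _))).1
    ((hcalm u).trans (iInf_le _ x))

theorem stmt3_general {m n : ℕ}
    (φ : EuclideanSpace ℝ (Fin n) → EReal)
    (f : EuclideanSpace ℝ (Fin m) → EuclideanSpace ℝ (Fin n) → EReal)
    (ub : EuclideanSpace ℝ (Fin m))
    (N : EuclideanSpace ℝ (Fin m) → ℝ)
    (hN0 : ∀ u, N u = 0 ↔ u = 0)
    (hNadd : ∀ u₁ u₂, N (u₁ + u₂) ≤ N u₁ + N u₂)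
    (hNsmul : ∀ (c : ℝ) u, N (c • u) = |c| * N u)
    (θb : ℝ)
    (hRock : ∀ x, f ub x = φ x)
    (hcalm : ∀ u : EuclideanSpace ℝ (Fin m),
      (⨅ x, f ub x) - ((θb * N (u - ub) : ℝ) : EReal) ≤ ⨅ x, f u x) :
    ∀ θ : ℝ, θb ≤ θ →
      ((∀ x, f ub x + ((θ * N (ub - ub) : ℝ) : EReal) = φ x) ∧
       (∀ xs, (∀ x, φ xs ≤ φ x) →
          ∀ (u : EuclideanSpace ℝ (Fin m)) (x : EuclideanSpace ℝ (Fin n)),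
            f ub xs + ((θ * N (ub - ub) : ℝ) : EReal) ≤ f u x + ((θ * N (u - ub) : ℝ) : EReal)) ∧
       (θb < θ → (⨅ x, f ub x) ≠ ⊤ → (⨅ x, f ub x) ≠ ⊥ →
          ∀ (us : EuclideanSpace ℝ (Fin m)) (xs : EuclideanSpace ℝ (Fin n)),
            (∀ (u : EuclideanSpace ℝ (Fin m)) (x : EuclideanSpace ℝ (Fin n)),
              f us xs + ((θ * N (us - ub) : ℝ) : EReal) ≤ f u x + ((θ * N (u - ub) : ℝ) : EReal)) →
            us = ub ∧ ∀ x, φ xs ≤ φ x)) := by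
  intro θ hθ
  have hNnonneg := nonneg_of_subadditive_of_abs_smul hNadd hNsmul
  have hanchor : ((θ * N (ub - ub) : ℝ) : EReal) = 0 := by simp [(hN0 0).2 rfl]
  have hpenalty (u : EuclideanSpace ℝ (Fin m)) :
      ((θb * N (u - ub) : ℝ) : EReal) ≤ ((θ * N (u - ub) : ℝ) : EReal) :=
    EReal.coe_le_coe_iff.2 (mul_le_mul_of_nonneg_right hθ (hNnonneg _))
  refine ⟨fun x ↦ by rw [hanchor, add_zero, hRock], fun xs hxs u x ↦ ?_, ?_⟩
  · calc f ub xs + ((θ * N (ub - ub) : ℝ) : EReal) = f ub xs := by rw [hanchor, add_zero]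
      _ ≤ ⨅ x, f ub x := le_iInf fun x ↦ by simpa only [hRock] using hxs x
      _ ≤ f u x + ((θb * N (u - ub) : ℝ) : EReal) := iInf_le_add_of_calm hcalm u x
      _ ≤ f u x + ((θ * N (u - ub) : ℝ) : EReal) := add_le_add_right (hpenalty u) _
  · intro hlt htop hbot us xs hmin
    have hbelow : f us xs + ((θ * N (us - ub) : ℝ) : EReal) ≤ ⨅ x, f ub x :=
      le_iInf fun x ↦ by simpa only [hanchor, add_zero] using hmin ub x
    have hle := EReal.le_of_add_le_of_le_add hbot htop hbelow (iInf_le_add_of_calm hcalm us xs)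
    have hNus : N (us - ub) = 0 :=
      le_antisymm (le_of_mul_le_mul_left (by linarith) (sub_pos.2 hlt)) (hNnonneg _)
    obtain rfl : us = ub := sub_eq_zero.1 ((hN0 _).1 hNus)
    refine ⟨rfl, fun x ↦ ?_⟩
    simpa only [hanchor, add_zero, hRock] using hmin us x

/-- Exactness from calmness. If `inf_x f(u,x) ≥ inf_x f(ū,x) − θ̄‖u − ū‖` for all
`u` (for some norm `N` on `ℝ^m`), then for `θ ≥ θ̄` the function
`f_θ(u,x) = f(u,x) + θ N(u − ū)` is a Rockafellian with the same anchor, exact for `ȳ = 0`;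
moreover if `θ > θ̄` and `inf_x f(ū,x)` is finite, every minimizer `(u⋆,x⋆)` of `f_θ`
has `u⋆ = ū` and `x⋆` minimizing `φ`. -/
theorem stmt3 {m n : ℕ}
    (φ : EuclideanSpace ℝ (Fin n) → EReal)
    (f : EuclideanSpace ℝ (Fin m) → EuclideanSpace ℝ (Fin n) → EReal)
    (ub : EuclideanSpace ℝ (Fin m))
    (N : EuclideanSpace ℝ (Fin m) → ℝ)
    (hN0 : ∀ u, N u = 0 ↔ u = 0)
    (hNadd : ∀ u₁ u₂, N (u₁ + u₂) ≤ N u₁ + N u₂)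
    (hNsmul : ∀ (c : ℝ) u, N (c • u) = |c| * N u)
    (θb : ℝ) (hθb : 0 ≤ θb)
    (hRock : ∀ x, f ub x = φ x)
    (hcalm : ∀ u : EuclideanSpace ℝ (Fin m),
      (⨅ x, f ub x) - ((θb * N (u - ub) : ℝ) : EReal) ≤ ⨅ x, f u x) :
    ∀ θ : ℝ, θb ≤ θ →
      ((∀ x, f ub x + ((θ * N (ub - ub) : ℝ) : EReal) = φ x) ∧
       (∀ xs, (∀ x, φ xs ≤ φ x) →
          ∀ (u : EuclideanSpace ℝ (Fin m)) (x : EuclideanSpace ℝ (Fin n)),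
            f ub xs + ((θ * N (ub - ub) : ℝ) : EReal) ≤ f u x + ((θ * N (u - ub) : ℝ) : EReal)) ∧
       (θb < θ → (⨅ x, f ub x) ≠ ⊤ → (⨅ x, f ub x) ≠ ⊥ →
          ∀ (us : EuclideanSpace ℝ (Fin m)) (xs : EuclideanSpace ℝ (Fin n)),
            (∀ (u : EuclideanSpace ℝ (Fin m)) (x : EuclideanSpace ℝ (Fin n)),
              f us xs + ((θ * N (us - ub) : ℝ) : EReal) ≤ f u x + ((θ * N (u - ub) : ℝ) : EReal)) →
            us = ub ∧ ∀ x, φ xs ≤ φ x)) :=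
  stmt3_general φ f ub N hN0 hNadd hNsmul θb hRock hcalm
end

section
/- Suppose functions f^ν : ℝ^m × ℝ^n → ℝ∪{±∞} epi-converge to f, where f is a Rockafellian for minimizing a function φ with nonempty domain, f has anchor ū, and f is strictly exact for ȳ. Let y^ν → ȳ, ε^ν ↓ 0, and (u^ν, x^ν) be ε^ν-minimizers of (u,x) ↦ f^ν(u,x) − ⟨y^ν, u⟩. Then every cluster point (û, x̂) of the sequence (u^ν, x^ν) satisfies û = ū and x̂ ∈ argmin φ. -/
/-!
Fix a cluster point `(û, x̂) = lim (u^{σ k}, x^{σ k})` and any `(u, x)` with a recovery sequence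
`(u'^ν, x'^ν)`. Testing the `ε^ν`-optimality of `(u^ν, x^ν)` against `(u'^ν, x'^ν)` gives
`f^ν(u^ν, x^ν) ≤ f^ν(u'^ν, x'^ν) + ⟨y^ν, u^ν⟩ - ⟨y^ν, u'^ν⟩ + ε^ν`; passing to the liminf along `σ`
(liminf half of epi-convergence) on the left and the limsup on the right yields
`f(û, x̂) - ⟨ȳ, û⟩ ≤ f(u, x) - ⟨ȳ, u⟩`. So `(û, x̂)` minimizes `f - ⟨ȳ, · - ū⟩`, and strict
exactness gives `û = ū` and `x̂ ∈ argmin φ`.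
-/

open Filter Topology RealInnerProductSpace

namespace EReal

theorem sub_coe_add_coe (x : EReal) (s t : ℝ) : x - s + t = x + ((t - s : ℝ) : EReal) := by
  rw [sub_eq_add_neg, add_assoc, ← coe_neg, ← coe_add, neg_add_eq_sub]

theorem sub_le_sub_of_le_add_coe_sub {a b : EReal} {s t : ℝ} (h : a ≤ b + ((s - t : ℝ) : EReal)) :
    a - s ≤ b - t := by
  rwa [sub_le_iff_le_add (.inl (coe_ne_bot _)) (.inl (coe_ne_top _)), sub_coe_add_coe]

theorem le_add_of_le_iInf_sub_add {ι : Type*} {F : ι → EReal} {L : ι → ℝ} {i : ι} {ε : ℝ}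
    (h : F i - L i ≤ (⨅ k, F k - L k) + ε) (j : ι) :
    F i ≤ F j + ((L i - L j + ε : ℝ) : EReal) := by
  have hj : F i - L i ≤ F j - L j + ε := h.trans (add_le_add_left (iInf_le _ j) _)
  rw [sub_le_iff_le_add (.inl (coe_ne_bot _)) (.inl (coe_ne_top _)), sub_coe_add_coe,
    add_assoc, ← coe_add] at hj
  convert hj using 3
  ring

theorem liminf_le_limsup_add_of_le_add {ι : Type*} {l : Filter ι} [l.NeBot] {a b : ι → EReal}
    {r : ι → ℝ} {ρ : ℝ} (hab : ∀ᶠ k in l, a k ≤ b k + r k) (hr : Tendsto r l (𝓝 ρ)) :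
    liminf a l ≤ limsup b l + ρ := by
  have hρ : liminf (fun k => (r k : EReal)) l = ρ := (tendsto_coe.mpr hr).liminf_eq
  calc liminf a l ≤ liminf (fun k => b k + r k) l := liminf_le_liminf hab
    _ ≤ limsup b l + liminf (fun k => (r k : EReal)) l :=
      liminf_add_le (.inr (hρ ▸ coe_ne_top _)) (.inr (hρ ▸ coe_ne_bot _))
    _ = limsup b l + ρ := by rw [hρ]

end EReal

open Classical in
theorem StrictMono.tendsto_ite_mem_range {α : Type*} [TopologicalSpace α] {σ : ℕ → ℕ}
    (hσ : StrictMono σ) {v : ℕ → α} {a : α} (h : Tendsto (fun k => v (σ k)) atTop (𝓝 a)) :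
    Tendsto (fun ν => if ν ∈ Set.range σ then v ν else a) atTop (𝓝 a) := by
  rw [tendsto_atTop_nhds] at h ⊢
  intro s has hs
  obtain ⟨K, hK⟩ := h s has hs
  refine ⟨σ K, fun ν hν => ?_⟩
  split_ifs with hmem
  · obtain ⟨k, rfl⟩ := hmem
    exact hK k (hσ.le_iff_le.mp hν)
  · exact has

section EpiConvergence

variable {U X : Type*} [TopologicalSpace X] {f : U → X → EReal} {fν : ℕ → U → X → EReal}

theorem le_liminf_comp_of_epi_liminf [TopologicalSpace U]
    (hliminf : ∀ (u : U) (x : X) (useq : ℕ → U) (xseq : ℕ → X),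
      Tendsto useq atTop (𝓝 u) → Tendsto xseq atTop (𝓝 x) →
        f u x ≤ liminf (fun ν => fν ν (useq ν) (xseq ν)) atTop)
    {σ : ℕ → ℕ} (hσ : StrictMono σ) {uν : ℕ → U} {xν : ℕ → X} {u : U} {x : X}
    (hu : Tendsto (fun k => uν (σ k)) atTop (𝓝 u)) (hx : Tendsto (fun k => xν (σ k)) atTop (𝓝 x)) :
    f u x ≤ liminf (fun k => fν (σ k) (uν (σ k)) (xν (σ k))) atTop := by
  classical
  set g : ℕ → EReal := fun ν =>
    fν ν (if ν ∈ Set.range σ then uν ν else u) (if ν ∈ Set.range σ then xν ν else x)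
  calc f u x ≤ liminf g atTop :=
        hliminf u x _ _ (hσ.tendsto_ite_mem_range hu) (hσ.tendsto_ite_mem_range hx)
    _ ≤ liminf (g ∘ σ) atTop := hσ.tendsto_atTop.liminf_le_liminf_comp
    _ = liminf (fun k => fν (σ k) (uν (σ k)) (xν (σ k))) atTop := by
      simp only [g, Function.comp_def, Set.mem_range_self, if_true]

theorem le_add_inner_sub_of_approxMinimizers [NormedAddCommGroup U] [InnerProductSpace ℝ U]
    (hliminf : ∀ (u : U) (x : X) (useq : ℕ → U) (xseq : ℕ → X),
      Tendsto useq atTop (𝓝 u) → Tendsto xseq atTop (𝓝 x) →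
        f u x ≤ liminf (fun ν => fν ν (useq ν) (xseq ν)) atTop)
    {yν : ℕ → U} {yb : U} (hy : Tendsto yν atTop (𝓝 yb))
    {εν : ℕ → ℝ} (hε : Tendsto εν atTop (𝓝 0)) {uν : ℕ → U} {xν : ℕ → X}
    (hmin : ∀ ν, fν ν (uν ν) (xν ν) - ((⟪yν ν, uν ν⟫ : ℝ) : EReal) ≤
      (⨅ p : U × X, fν ν p.1 p.2 - ((⟪yν ν, p.1⟫ : ℝ) : EReal)) + ((εν ν : ℝ) : EReal))
    {σ : ℕ → ℕ} (hσ : StrictMono σ) {uh : U} {xh : X}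
    (huh : Tendsto (fun k => uν (σ k)) atTop (𝓝 uh))
    (hxh : Tendsto (fun k => xν (σ k)) atTop (𝓝 xh))
    {u : U} {x : X} {useq : ℕ → U} {xseq : ℕ → X} (hu : Tendsto useq atTop (𝓝 u))
    (hlimsup : limsup (fun ν => fν ν (useq ν) (xseq ν)) atTop ≤ f u x) :
    f uh xh ≤ f u x + ((⟪yb, uh⟫ - ⟪yb, u⟫ : ℝ) : EReal) := by
  have hcompare : ∀ k, fν (σ k) (uν (σ k)) (xν (σ k)) ≤ fν (σ k) (useq (σ k)) (xseq (σ k)) +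
      ((⟪yν (σ k), uν (σ k)⟫ - ⟪yν (σ k), useq (σ k)⟫ + εν (σ k) : ℝ) : EReal) := fun k =>
    EReal.le_add_of_le_iInf_sub_add (F := fun p : U × X => fν (σ k) p.1 p.2)
      (L := fun p => ⟪yν (σ k), p.1⟫) (i := (uν (σ k), xν (σ k))) (hmin (σ k))
      (useq (σ k), xseq (σ k))
  have hσ_top := hσ.tendsto_atTop
  have hr : Tendsto (fun k => ⟪yν (σ k), uν (σ k)⟫ - ⟪yν (σ k), useq (σ k)⟫ + εν (σ k)) atTop
      (𝓝 (⟪yb, uh⟫ - ⟪yb, u⟫ + 0)) :=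
    (((hy.comp hσ_top).inner huh).sub ((hy.comp hσ_top).inner (hu.comp hσ_top))).add (hε.comp hσ_top)
  rw [add_zero] at hr
  calc f uh xh ≤ liminf (fun k => fν (σ k) (uν (σ k)) (xν (σ k))) atTop :=
        le_liminf_comp_of_epi_liminf hliminf hσ huh hxh
    _ ≤ limsup (fun k => fν (σ k) (useq (σ k)) (xseq (σ k))) atTop + _ :=
        EReal.liminf_le_limsup_add_of_le_add (.of_forall hcompare) hr
    _ ≤ f u x + _ := by
        gcongr
        exact hσ_top.limsup_comp_le_limsup.trans hlimsup

end EpiConvergence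

theorem stmt4_general {m n : ℕ}
    (φ : EuclideanSpace ℝ (Fin n) → EReal)
    (f : EuclideanSpace ℝ (Fin m) → EuclideanSpace ℝ (Fin n) → EReal)
    (fν : ℕ → EuclideanSpace ℝ (Fin m) → EuclideanSpace ℝ (Fin n) → EReal)
    (ub yb : EuclideanSpace ℝ (Fin m))
    -- epi-convergence of `f^ν` to `f`: liminf condition
    (hliminf : ∀ (u : EuclideanSpace ℝ (Fin m)) (x : EuclideanSpace ℝ (Fin n))
        (useq : ℕ → EuclideanSpace ℝ (Fin m)) (xseq : ℕ → EuclideanSpace ℝ (Fin n)),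
        Tendsto useq atTop (𝓝 u) → Tendsto xseq atTop (𝓝 x) →
        f u x ≤ Filter.liminf (fun ν => fν ν (useq ν) (xseq ν)) atTop)
    -- epi-convergence of `f^ν` to `f`: limsup (recovery sequence) condition
    (hlimsup : ∀ (u : EuclideanSpace ℝ (Fin m)) (x : EuclideanSpace ℝ (Fin n)),
        ∃ (useq : ℕ → EuclideanSpace ℝ (Fin m)) (xseq : ℕ → EuclideanSpace ℝ (Fin n)),
          Tendsto useq atTop (𝓝 u) ∧ Tendsto xseq atTop (𝓝 x) ∧
          Filter.limsup (fun ν => fν ν (useq ν) (xseq ν)) atTop ≤ f u x)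
    (hstrict : ∀ (us : EuclideanSpace ℝ (Fin m)) (xs : EuclideanSpace ℝ (Fin n)),
        (∀ (u : EuclideanSpace ℝ (Fin m)) (x : EuclideanSpace ℝ (Fin n)),
          f us xs - ((⟪yb, us - ub⟫ : ℝ) : EReal) ≤ f u x - ((⟪yb, u - ub⟫ : ℝ) : EReal)) →
        us = ub ∧ ∀ x, φ xs ≤ φ x)
    -- data of the approximating problems
    (yν : ℕ → EuclideanSpace ℝ (Fin m)) (hy : Tendsto yν atTop (𝓝 yb))
    (εν : ℕ → ℝ)
    (hε : Tendsto εν atTop (𝓝 0))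
    (uν : ℕ → EuclideanSpace ℝ (Fin m)) (xν : ℕ → EuclideanSpace ℝ (Fin n))
    -- `(u^ν, x^ν)` is an `ε^ν`-minimizer with finite value
    (hargmin : ∀ ν, fν ν (uν ν) (xν ν) - ((⟪yν ν, uν ν⟫ : ℝ) : EReal) ≠ ⊤ ∧
        fν ν (uν ν) (xν ν) - ((⟪yν ν, uν ν⟫ : ℝ) : EReal) ≠ ⊥ ∧
        fν ν (uν ν) (xν ν) - ((⟪yν ν, uν ν⟫ : ℝ) : EReal) ≤
          (⨅ p : EuclideanSpace ℝ (Fin m) × EuclideanSpace ℝ (Fin n),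
            fν ν p.1 p.2 - ((⟪yν ν, p.1⟫ : ℝ) : EReal)) + ((εν ν : ℝ) : EReal)) :
    -- every cluster point `(û, x̂)` of the sequence satisfies `û = ū` and `x̂ ∈ argmin φ`
    ∀ (uh : EuclideanSpace ℝ (Fin m)) (xh : EuclideanSpace ℝ (Fin n)),
      (∃ σ : ℕ → ℕ, StrictMono σ ∧ Tendsto (fun k => uν (σ k)) atTop (𝓝 uh) ∧
        Tendsto (fun k => xν (σ k)) atTop (𝓝 xh)) →
      uh = ub ∧ ∀ x, φ xh ≤ φ x := by
  rintro uh xh ⟨σ, hσ, huh, hxh⟩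
  refine hstrict uh xh fun u x => EReal.sub_le_sub_of_le_add_coe_sub ?_
  obtain ⟨useq, xseq, hu, -, hls⟩ := hlimsup u x
  have hshift : ⟪yb, uh - ub⟫ - ⟪yb, u - ub⟫ = ⟪yb, uh⟫ - ⟪yb, u⟫ := by
    simp only [inner_sub_right]; ring
  rw [hshift]
  exact le_add_inner_sub_of_approxMinimizers hliminf hy hε (fun ν => (hargmin ν).2.2) hσ huh hxh
    hu hls

/-- Convergence under asymptotic strict exactness. If `f^ν` epi-converge to a
strictly exact Rockafellian `f` (anchor `ū`, multiplier `ȳ`) for minimizing `φ` (with nonempty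
domain), `y^ν → ȳ`, `ε^ν ↓ 0`, and `(u^ν,x^ν)` are `ε^ν`-minimizers of
`(u,x) ↦ f^ν(u,x) − ⟨y^ν,u⟩`, then every cluster point `(û,x̂)` has `û = ū` and
`x̂ ∈ argmin φ`. -/
theorem stmt4 {m n : ℕ}
    (φ : EuclideanSpace ℝ (Fin n) → EReal)
    (f : EuclideanSpace ℝ (Fin m) → EuclideanSpace ℝ (Fin n) → EReal)
    (fν : ℕ → EuclideanSpace ℝ (Fin m) → EuclideanSpace ℝ (Fin n) → EReal)
    (ub yb : EuclideanSpace ℝ (Fin m))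
    (hdom : ∃ x, φ x ≠ ⊤)
    (hRock : ∀ x, f ub x = φ x)
    -- epi-convergence of `f^ν` to `f`: liminf condition
    (hliminf : ∀ (u : EuclideanSpace ℝ (Fin m)) (x : EuclideanSpace ℝ (Fin n))
        (useq : ℕ → EuclideanSpace ℝ (Fin m)) (xseq : ℕ → EuclideanSpace ℝ (Fin n)),
        Tendsto useq atTop (𝓝 u) → Tendsto xseq atTop (𝓝 x) →
        f u x ≤ Filter.liminf (fun ν => fν ν (useq ν) (xseq ν)) atTop)
    -- epi-convergence of `f^ν` to `f`: limsup (recovery sequence) condition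
    (hlimsup : ∀ (u : EuclideanSpace ℝ (Fin m)) (x : EuclideanSpace ℝ (Fin n)),
        ∃ (useq : ℕ → EuclideanSpace ℝ (Fin m)) (xseq : ℕ → EuclideanSpace ℝ (Fin n)),
          Tendsto useq atTop (𝓝 u) ∧ Tendsto xseq atTop (𝓝 x) ∧
          Filter.limsup (fun ν => fν ν (useq ν) (xseq ν)) atTop ≤ f u x)
    -- strict exactness of `f` for `ȳ`
    (hexact : ∀ xs, (∀ x, φ xs ≤ φ x) →
        ∀ (u : EuclideanSpace ℝ (Fin m)) (x : EuclideanSpace ℝ (Fin n)),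
          f ub xs - ((⟪yb, ub - ub⟫ : ℝ) : EReal) ≤ f u x - ((⟪yb, u - ub⟫ : ℝ) : EReal))
    (hstrict : ∀ (us : EuclideanSpace ℝ (Fin m)) (xs : EuclideanSpace ℝ (Fin n)),
        (∀ (u : EuclideanSpace ℝ (Fin m)) (x : EuclideanSpace ℝ (Fin n)),
          f us xs - ((⟪yb, us - ub⟫ : ℝ) : EReal) ≤ f u x - ((⟪yb, u - ub⟫ : ℝ) : EReal)) →
        us = ub ∧ ∀ x, φ xs ≤ φ x)
    -- data of the approximating problems
    (yν : ℕ → EuclideanSpace ℝ (Fin m)) (hy : Tendsto yν atTop (𝓝 yb))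
    (εν : ℕ → ℝ) (hεpos : ∀ ν, 0 ≤ εν ν) (hεanti : Antitone εν)
    (hε : Tendsto εν atTop (𝓝 0))
    (uν : ℕ → EuclideanSpace ℝ (Fin m)) (xν : ℕ → EuclideanSpace ℝ (Fin n))
    -- `(u^ν, x^ν)` is an `ε^ν`-minimizer with finite value
    (hargmin : ∀ ν, fν ν (uν ν) (xν ν) - ((⟪yν ν, uν ν⟫ : ℝ) : EReal) ≠ ⊤ ∧
        fν ν (uν ν) (xν ν) - ((⟪yν ν, uν ν⟫ : ℝ) : EReal) ≠ ⊥ ∧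
        fν ν (uν ν) (xν ν) - ((⟪yν ν, uν ν⟫ : ℝ) : EReal) ≤
          (⨅ p : EuclideanSpace ℝ (Fin m) × EuclideanSpace ℝ (Fin n),
            fν ν p.1 p.2 - ((⟪yν ν, p.1⟫ : ℝ) : EReal)) + ((εν ν : ℝ) : EReal)) :
    -- every cluster point `(û, x̂)` of the sequence satisfies `û = ū` and `x̂ ∈ argmin φ`
    ∀ (uh : EuclideanSpace ℝ (Fin m)) (xh : EuclideanSpace ℝ (Fin n)),
      (∃ σ : ℕ → ℕ, StrictMono σ ∧ Tendsto (fun k => uν (σ k)) atTop (𝓝 uh) ∧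
        Tendsto (fun k => xν (σ k)) atTop (𝓝 xh)) →
      uh = ub ∧ ∀ x, φ xh ≤ φ x :=
  stmt4_general φ f fν ub yb hliminf hlimsup hstrict yν hy εν hε uν xν hargmin
end

section
/- Let f₀, f₁, …, f_s : ℝ^n → ℝ∪{∞} be proper lower semicontinuous functions, p ∈ Δ, p^ν ∈ Δ, θ^ν ≥ 0 with θ^ν → ∞ and θ^ν ‖p^ν − p‖₂² → 0. Define f(u,x) = f₀(x) + Σᵢ (pᵢ+uᵢ) fᵢ(x) + ι_{{0}}(u) and f^ν(u,x) = f₀(x) + Σᵢ (pᵢ^ν+uᵢ) fᵢ(x) + (θ^ν/2)‖u‖₂² + ι_Δ(p^ν+u). Then f^ν epi-converges to f on ℝ^s × ℝ^n. -/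
/-!
On the set of indices where `p^ν + u^ν ∈ Δ` (elsewhere `f^ν = ∞`) the weights `p^ν + u^ν` are
nonnegative and converge to `p + u`, and a weighted sum `Σᵢ cᵢ fᵢ(x)` of proper lsc functions is
jointly lower semicontinuous in `(c, x)` as long as the weights stay nonnegative: approximate each
`fᵢ(x)` from below by reals. The penalty `(θ^ν/2)‖u^ν‖²` is nonnegative, and tends to `∞` when
`u ≠ 0`; this gives the liminf inequality. Since `θ^ν → ∞`, the hypothesis
`θ^ν‖p^ν − p‖² → 0` forces `p^ν → p`, so `u^ν = p − p^ν`, `x^ν = x` is a recovery sequence at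
`u = 0`: then `p^ν + u^ν = p` and the penalty tends to `0`.
-/

open Filter Topology
open scoped Classical

/-- Weighted sum `Σᵢ cᵢ aᵢ` of extended reals `aᵢ ∈ (−∞,∞]` with weights `cᵢ ∈ ℝ`, under the
conventions `0·∞ = 0` and `∞ − ∞ = ∞` (any term with nonzero weight hitting `∞` makes the
whole sum `∞`). -/
noncomputable def wsum {s : ℕ} (c : Fin s → ℝ) (a : Fin s → EReal) : EReal :=
  if ∃ i, c i ≠ 0 ∧ a i = ⊤ then ⊤ else ((∑ i, c i * (a i).toReal : ℝ) : EReal)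

section WeightedSum

variable {s : ℕ}

theorem wsum_ne_bot (c : Fin s → ℝ) (a : Fin s → EReal) : wsum c a ≠ ⊥ := by
  unfold wsum
  split_ifs <;> simp

theorem coe_sum_mul_le_wsum {c : Fin s → ℝ} (hc : ∀ i, 0 ≤ c i) {a : Fin s → EReal}
    {r : Fin s → ℝ} (hr : ∀ i, (r i : EReal) ≤ a i) :
    ((∑ i, c i * r i : ℝ) : EReal) ≤ wsum c a := by
  unfold wsum
  split_ifs with htop
  · exact le_top
  · push Not at htop
    refine EReal.coe_le_coe_iff.2 (Finset.sum_le_sum fun i _ => ?_)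
    rcases (hc i).eq_or_lt with hci | hci
    · simp [← hci]
    · have hai : a i ≠ ⊤ := htop i hci.ne'
      have hri : (r i : EReal) ≤ ((a i).toReal : EReal) := by
        rw [EReal.coe_toReal hai (ne_bot_of_le_ne_bot (EReal.coe_ne_bot _) (hr i))]
        exact hr i
      exact mul_le_mul_of_nonneg_left (EReal.coe_le_coe_iff.1 hri) (hc i)

theorem exists_lt_sum_mul_of_lt_wsum {c : Fin s → ℝ} {a : Fin s → EReal} (ha : ∀ i, a i ≠ ⊥)
    {w : ℝ} (hw : (w : EReal) < wsum c a) :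
    ∃ r : Fin s → ℝ, (∀ i, (r i : EReal) < a i) ∧ w < ∑ i, c i * r i := by
  unfold wsum at hw
  split_ifs at hw with htop
  · -- a nonzero weight meets `⊤`: raise that coordinate until the sum exceeds `w`
    obtain ⟨i₀, hci₀, hai₀⟩ := htop
    choose r hr using fun i => EReal.lt_iff_exists_real_btwn.1 (bot_lt_iff_ne_bot.2 (ha i))
    let R := (w + 1 - ∑ i, c i * r i) / c i₀
    refine ⟨(r + Pi.single i₀ R : Fin s → ℝ), fun i => ?_, ?_⟩
    · rcases eq_or_ne i i₀ with rfl | hi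
      · rw [hai₀]
        exact EReal.coe_lt_top _
      · simpa [hi] using (hr i).2
    · have hsum : ∑ i, c i * (r + Pi.single i₀ R : Fin s → ℝ) i = ∑ i, c i * r i + c i₀ * R := by
        simp [mul_add, Finset.sum_add_distrib, Pi.single_apply]
      rw [hsum, mul_div_cancel₀ _ hci₀]
      linarith
  · have hcont : Continuous fun ε : ℝ => ∑ i, c i * ((a i).toReal - ε) := by fun_prop
    obtain ⟨ε, hε, hwε⟩ := ((hcont.tendsto 0).eventually
      (lt_mem_nhds (by simpa using EReal.coe_lt_coe_iff.1 hw))).exists_gt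
    refine ⟨fun i => (a i).toReal - ε, fun i => ?_, hwε⟩
    by_cases hai : a i = ⊤
    · rw [hai]
      exact EReal.coe_lt_top _
    · rw [← EReal.coe_toReal hai (ha i)]
      exact EReal.coe_lt_coe_iff.2 (sub_lt_self _ hε)

variable {ι : Type*} {l : Filter ι}

theorem wsum_le_liminf_wsum {c : Fin s → ℝ} {a : Fin s → EReal} {cν : ι → Fin s → ℝ}
    {aν : ι → Fin s → EReal} (ha : ∀ i, a i ≠ ⊥) (hc : Tendsto cν l (𝓝 c))
    (hcν : ∀ᶠ k in l, ∀ i, 0 ≤ cν k i) (haν : ∀ i, a i ≤ liminf (fun k => aν k i) l) :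
    wsum c a ≤ liminf (fun k => wsum (cν k) (aν k)) l := by
  refine (le_liminf_iff).2 fun b hb => ?_
  obtain ⟨w, hbw, hw⟩ := EReal.lt_iff_exists_real_btwn.1 hb
  obtain ⟨r, hr, hwr⟩ := exists_lt_sum_mul_of_lt_wsum ha hw
  have hlt : ∀ᶠ k in l, ∀ i, (r i : EReal) < aν k i :=
    eventually_all.2 fun i => eventually_lt_of_lt_liminf ((hr i).trans_le (haν i))
  have hsum : Tendsto (fun k => ∑ i, cν k i * r i) l (𝓝 (∑ i, c i * r i)) :=
    tendsto_finsetSum _ fun i _ => ((continuous_apply i).tendsto c |>.comp hc).mul_const _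
  filter_upwards [hcν, hlt, hsum.eventually (lt_mem_nhds hwr)] with k hk hrk hwk
  exact hbw.trans ((EReal.coe_lt_coe_iff.2 hwk).trans_le
    (coe_sum_mul_le_wsum hk fun i => (hrk i).le))

end WeightedSum

theorem liminf_inf_principal_le_liminf_ite {ι β : Type*} [CompleteLinearOrder β] {l : Filter ι}
    {P : ι → Prop} [DecidablePred P] (u : ι → β) :
    liminf u (l ⊓ 𝓟 {k | P k}) ≤ liminf (fun k => if P k then u k else ⊤) l := by
  refine (le_liminf_iff).2 fun b hb => ?_
  filter_upwards [eventually_inf_principal.1 (eventually_lt_of_lt_liminf hb)] with k hk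
  split_ifs with hPk
  exacts [hk hPk, hb.trans_le le_top]

theorem tendsto_zero_of_tendsto_mul_norm_sq {ι E : Type*} [SeminormedAddCommGroup E]
    {l : Filter ι} {θ : ι → ℝ} {v : ι → E} (hθ : Tendsto θ l atTop)
    (h : Tendsto (fun k => θ k * ‖v k‖ ^ 2) l (𝓝 0)) : Tendsto v l (𝓝 0) := by
  have hsq : Tendsto (fun k => ‖v k‖ ^ 2) l (𝓝 0) := by
    refine (mul_zero (0 : ℝ) ▸ h.mul hθ.inv_tendsto_atTop).congr' ?_
    filter_upwards [hθ.eventually_gt_atTop 0] with k hk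
    rw [Pi.inv_apply]
    field_simp
  simpa [tendsto_zero_iff_norm_tendsto_zero, Real.sqrt_sq (norm_nonneg _)] using hsq.sqrt

section Rockafellian

variable {X : Type*} {s : ℕ}

noncomputable def rockafellian (f₀ : X → EReal) (F : Fin s → X → EReal)
    (p u : EuclideanSpace ℝ (Fin s)) (x : X) : EReal :=
  if u = 0 then f₀ x + wsum (fun i => p i) (fun i => F i x) else ⊤

noncomputable def penalizedRockafellian (f₀ : X → EReal) (F : Fin s → X → EReal)
    (q : EuclideanSpace ℝ (Fin s)) (θ : ℝ) (u : EuclideanSpace ℝ (Fin s)) (x : X) : EReal :=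
  if (∀ i, 0 ≤ q i + u i) ∧ ∑ i, (q i + u i) = 1 then
    f₀ x + wsum (fun i => q i + u i) (fun i => F i x) + ((θ / 2 * ‖u‖ ^ 2 : ℝ) : EReal)
  else ⊤

variable {ι : Type*} {l : Filter ι}

theorem limsup_penalizedRockafellian_le [l.NeBot] {f₀ : X → EReal} {F : Fin s → X → EReal}
    {p : EuclideanSpace ℝ (Fin s)} (hp : (∀ i, 0 ≤ p i) ∧ ∑ i, p i = 1)
    {pν : ι → EuclideanSpace ℝ (Fin s)} {θν : ι → ℝ}
    (hθp : Tendsto (fun k => θν k * ‖pν k - p‖ ^ 2) l (𝓝 0)) (x : X) :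
    limsup (fun k => penalizedRockafellian f₀ F (pν k) (θν k) (p - pν k) x) l ≤
      rockafellian f₀ F p 0 x := by
  set g := f₀ x + wsum (fun i => p i) (fun i => F i x)
  have hpen : Tendsto (fun k => θν k / 2 * ‖p - pν k‖ ^ 2) l (𝓝 0) := by
    simpa [norm_sub_rev, div_mul_eq_mul_div] using hθp.div_const 2
  have heq : (fun k => penalizedRockafellian f₀ F (pν k) (θν k) (p - pν k) x) =
      fun k => g + ((θν k / 2 * ‖p - pν k‖ ^ 2 : ℝ) : EReal) := by
    funext k
    simp [penalizedRockafellian, hp.1, hp.2, g]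
  have hlim : Tendsto (fun k => g + ((θν k / 2 * ‖p - pν k‖ ^ 2 : ℝ) : EReal)) l (𝓝 g) := by
    have hadd := EReal.continuousAt_add (p := (g, 0)) (Or.inr (by simp)) (Or.inr (by simp))
    have := hadd.tendsto.comp (tendsto_const_nhds.prodMk_nhds (EReal.tendsto_coe.2 hpen))
    simpa only [Function.comp_def, add_zero] using this
  rw [heq, hlim.limsup_eq]
  simp [rockafellian, g]

variable [TopologicalSpace X]

theorem add_wsum_le_liminf {f₀ : X → EReal} {F : Fin s → X → EReal} {x : X} {xν : ι → X}
    {c : Fin s → ℝ} {cν : ι → Fin s → ℝ} (hF : ∀ i, F i x ≠ ⊥)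
    (hf₀ : LowerSemicontinuousAt f₀ x) (hFlsc : ∀ i, LowerSemicontinuousAt (F i) x)
    (hx : Tendsto xν l (𝓝 x)) (hc : Tendsto cν l (𝓝 c)) (hcν : ∀ᶠ k in l, ∀ i, 0 ≤ cν k i) :
    f₀ x + wsum c (fun i => F i x) ≤
      liminf (fun k => f₀ (xν k) + wsum (cν k) (fun i => F i (xν k))) l :=
  (add_le_add (hf₀.le_liminf.trans hx.liminf_le_liminf_comp)
    (wsum_le_liminf_wsum hF hc hcν fun i =>
      (hFlsc i).le_liminf.trans hx.liminf_le_liminf_comp)).trans EReal.le_liminf_add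

theorem rockafellian_le_liminf_penalizedRockafellian {f₀ : X → EReal} {F : Fin s → X → EReal}
    {p u : EuclideanSpace ℝ (Fin s)} {x : X} {pν uν : ι → EuclideanSpace ℝ (Fin s)}
    {xν : ι → X} {θν : ι → ℝ} (hf₀ : f₀ x ≠ ⊥) (hF : ∀ i, F i x ≠ ⊥)
    (hf₀lsc : LowerSemicontinuousAt f₀ x) (hFlsc : ∀ i, LowerSemicontinuousAt (F i) x)
    (hθnn : ∀ k, 0 ≤ θν k) (hθ : Tendsto θν l atTop) (hp : Tendsto pν l (𝓝 p))
    (hu : Tendsto uν l (𝓝 u)) (hx : Tendsto xν l (𝓝 x)) :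
    rockafellian f₀ F p u x ≤
      liminf (fun k => penalizedRockafellian f₀ F (pν k) (θν k) (uν k) (xν k)) l := by
  -- off this set the penalized Rockafellian is `⊤`
  let l' := l ⊓ 𝓟 {k | (∀ i, 0 ≤ pν k i + uν k i) ∧ ∑ i, (pν k i + uν k i) = 1}
  let pen : ι → EReal := fun k => ((θν k / 2 * ‖uν k‖ ^ 2 : ℝ) : EReal)
  let g := f₀ x + wsum (fun i => p i + u i) (fun i => F i x)
  have hq : Tendsto (fun k i => pν k i + uν k i) l' (𝓝 (fun i => p i + u i)) :=
    tendsto_pi_nhds.2 fun i => (((PiLp.continuous_apply 2 _ i).tendsto p).comp hp).add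
      (((PiLp.continuous_apply 2 _ i).tendsto u).comp hu) |>.mono_left inf_le_left
  have hG := add_wsum_le_liminf hF hf₀lsc hFlsc (hx.mono_left inf_le_left) hq
    (eventually_inf_principal.2 (Eventually.of_forall fun k hk => hk.1))
  have hg : rockafellian f₀ F p u x ≤ g + liminf pen l' := by
    by_cases hu0 : u = 0
    · subst hu0
      have hpen_nonneg : 0 ≤ liminf pen l' :=
        le_liminf_of_le (by isBoundedDefault) (Eventually.of_forall fun k =>
          EReal.coe_nonneg.2 (mul_nonneg (div_nonneg (hθnn k) two_pos.le) (sq_nonneg _)))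
      simpa [rockafellian, g] using le_add_of_nonneg_right hpen_nonneg
    · have hpen_atTop : Tendsto (fun k => θν k / 2 * ‖uν k‖ ^ 2) l atTop :=
        (hθ.atTop_div_const two_pos).atTop_mul_pos (pow_pos (norm_pos_iff.2 hu0) 2)
          (hu.norm.pow 2)
      have htop : liminf pen l' = ⊤ := top_le_iff.1 <| (le_liminf_iff).2 fun b hb =>
        ((EReal.tendsto_coe_atTop.comp hpen_atTop).mono_left inf_le_left).eventually
          (lt_mem_nhds hb)
      rw [htop, EReal.add_top_of_ne_bot (EReal.add_ne_bot_iff.2 ⟨hf₀, wsum_ne_bot _ _⟩)]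
      exact le_top
  calc rockafellian f₀ F p u x ≤ g + liminf pen l' := hg
    _ ≤ liminf (fun k => f₀ (xν k) + wsum (fun i => pν k i + uν k i) (fun i => F i (xν k))) l'
        + liminf pen l' := add_le_add_left hG _
    _ ≤ liminf (fun k => f₀ (xν k) + wsum (fun i => pν k i + uν k i) (fun i => F i (xν k))
        + pen k) l' := EReal.le_liminf_add
    _ ≤ _ := liminf_inf_principal_le_liminf_ite _

end Rockafellian

theorem stmt8_general {s n : ℕ}
    (f₀ : EuclideanSpace ℝ (Fin n) → EReal)
    (F : Fin s → EuclideanSpace ℝ (Fin n) → EReal)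
    -- properness and lower semicontinuity
    (hf₀proper : (∀ x, f₀ x ≠ ⊥) ∧ (∃ x, f₀ x ≠ ⊤)) (hf₀lsc : LowerSemicontinuous f₀)
    (hFproper : ∀ i, (∀ x, F i x ≠ ⊥) ∧ (∃ x, F i x ≠ ⊤))
    (hFlsc : ∀ i, LowerSemicontinuous (F i))
    -- probability vectors and parameters
    (p : EuclideanSpace ℝ (Fin s)) (hp : (∀ i, 0 ≤ p i) ∧ ∑ i, p i = 1)
    (pν : ℕ → EuclideanSpace ℝ (Fin s))
    (θν : ℕ → ℝ) (hθnn : ∀ ν, 0 ≤ θν ν)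
    (hθ : Tendsto θν atTop atTop)
    (hθp : Tendsto (fun ν => θν ν * ‖pν ν - p‖ ^ 2) atTop (𝓝 0)) :
    -- liminf condition of epi-convergence
    (∀ (u : EuclideanSpace ℝ (Fin s)) (x : EuclideanSpace ℝ (Fin n))
       (useq : ℕ → EuclideanSpace ℝ (Fin s)) (xseq : ℕ → EuclideanSpace ℝ (Fin n)),
       Tendsto useq atTop (𝓝 u) → Tendsto xseq atTop (𝓝 x) →
       (if u = 0 then f₀ x + wsum (fun i => p i) (fun i => F i x) else ⊤) ≤
         Filter.liminf (fun ν =>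
           if (∀ i, 0 ≤ pν ν i + useq ν i) ∧ ∑ i, (pν ν i + useq ν i) = 1 then
             f₀ (xseq ν) + wsum (fun i => pν ν i + useq ν i) (fun i => F i (xseq ν))
               + ((θν ν / 2 * ‖useq ν‖ ^ 2 : ℝ) : EReal)
           else ⊤) atTop) ∧
    -- limsup (recovery sequence) condition of epi-convergence
    (∀ (u : EuclideanSpace ℝ (Fin s)) (x : EuclideanSpace ℝ (Fin n)),
       ∃ (useq : ℕ → EuclideanSpace ℝ (Fin s)) (xseq : ℕ → EuclideanSpace ℝ (Fin n)),
         Tendsto useq atTop (𝓝 u) ∧ Tendsto xseq atTop (𝓝 x) ∧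
         Filter.limsup (fun ν =>
           if (∀ i, 0 ≤ pν ν i + useq ν i) ∧ ∑ i, (pν ν i + useq ν i) = 1 then
             f₀ (xseq ν) + wsum (fun i => pν ν i + useq ν i) (fun i => F i (xseq ν))
               + ((θν ν / 2 * ‖useq ν‖ ^ 2 : ℝ) : EReal)
           else ⊤) atTop ≤
         (if u = 0 then f₀ x + wsum (fun i => p i) (fun i => F i x) else ⊤)) := by
  have hpν : Tendsto pν atTop (𝓝 p) :=
    tendsto_sub_nhds_zero_iff.1 (tendsto_zero_of_tendsto_mul_norm_sq hθ hθp)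
  refine ⟨fun u x useq xseq hu hx => ?_, fun u x => ?_⟩
  · exact rockafellian_le_liminf_penalizedRockafellian (hf₀proper.1 x) (fun i => (hFproper i).1 x)
      (hf₀lsc x) (fun i => hFlsc i x) hθnn hθ hpν hu hx
  · by_cases hu : u = 0
    · subst hu
      refine ⟨fun ν => p - pν ν, fun _ => x, ?_, tendsto_const_nhds,
        limsup_penalizedRockafellian_le hp hθp x⟩
      simpa using (tendsto_const_nhds (x := p)).sub hpν
    · exact ⟨fun _ => u, fun _ => x, tendsto_const_nhds, tendsto_const_nhds, by simp [hu]⟩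

/-- With proper lsc `f₀,f₁,…,f_s`, `p, p^ν ∈ Δ`, `θ^ν → ∞` and
`θ^ν‖p^ν − p‖₂² → 0`, the Rockafellians
`f^ν(u,x) = f₀(x) + Σᵢ(pᵢ^ν+uᵢ)fᵢ(x) + (θ^ν/2)‖u‖₂² + ι_Δ(p^ν+u)` epi-converge to
`f(u,x) = f₀(x) + Σᵢ(pᵢ+uᵢ)fᵢ(x) + ι_{{0}}(u)`. -/
theorem stmt8 {s n : ℕ}
    (f₀ : EuclideanSpace ℝ (Fin n) → EReal)
    (F : Fin s → EuclideanSpace ℝ (Fin n) → EReal)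
    -- properness and lower semicontinuity
    (hf₀proper : (∀ x, f₀ x ≠ ⊥) ∧ (∃ x, f₀ x ≠ ⊤)) (hf₀lsc : LowerSemicontinuous f₀)
    (hFproper : ∀ i, (∀ x, F i x ≠ ⊥) ∧ (∃ x, F i x ≠ ⊤))
    (hFlsc : ∀ i, LowerSemicontinuous (F i))
    -- probability vectors and parameters
    (p : EuclideanSpace ℝ (Fin s)) (hp : (∀ i, 0 ≤ p i) ∧ ∑ i, p i = 1)
    (pν : ℕ → EuclideanSpace ℝ (Fin s)) (hpν : ∀ ν, (∀ i, 0 ≤ pν ν i) ∧ ∑ i, pν ν i = 1)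
    (θν : ℕ → ℝ) (hθnn : ∀ ν, 0 ≤ θν ν)
    (hθ : Tendsto θν atTop atTop)
    (hθp : Tendsto (fun ν => θν ν * ‖pν ν - p‖ ^ 2) atTop (𝓝 0)) :
    -- liminf condition of epi-convergence
    (∀ (u : EuclideanSpace ℝ (Fin s)) (x : EuclideanSpace ℝ (Fin n))
       (useq : ℕ → EuclideanSpace ℝ (Fin s)) (xseq : ℕ → EuclideanSpace ℝ (Fin n)),
       Tendsto useq atTop (𝓝 u) → Tendsto xseq atTop (𝓝 x) →
       (if u = 0 then f₀ x + wsum (fun i => p i) (fun i => F i x) else ⊤) ≤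
         Filter.liminf (fun ν =>
           if (∀ i, 0 ≤ pν ν i + useq ν i) ∧ ∑ i, (pν ν i + useq ν i) = 1 then
             f₀ (xseq ν) + wsum (fun i => pν ν i + useq ν i) (fun i => F i (xseq ν))
               + ((θν ν / 2 * ‖useq ν‖ ^ 2 : ℝ) : EReal)
           else ⊤) atTop) ∧
    -- limsup (recovery sequence) condition of epi-convergence
    (∀ (u : EuclideanSpace ℝ (Fin s)) (x : EuclideanSpace ℝ (Fin n)),
       ∃ (useq : ℕ → EuclideanSpace ℝ (Fin s)) (xseq : ℕ → EuclideanSpace ℝ (Fin n)),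
         Tendsto useq atTop (𝓝 u) ∧ Tendsto xseq atTop (𝓝 x) ∧
         Filter.limsup (fun ν =>
           if (∀ i, 0 ≤ pν ν i + useq ν i) ∧ ∑ i, (pν ν i + useq ν i) = 1 then
             f₀ (xseq ν) + wsum (fun i => pν ν i + useq ν i) (fun i => F i (xseq ν))
               + ((θν ν / 2 * ‖useq ν‖ ^ 2 : ℝ) : EReal)
           else ⊤) atTop ≤
         (if u = 0 then f₀ x + wsum (fun i => p i) (fun i => F i x) else ⊤)) :=
  stmt8_general f₀ F hf₀proper hf₀lsc hFproper hFlsc p hp pν θν hθnn hθ hθp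
end

section
/- Let f₀ : ℝ^n → ℝ∪{∞} and g : ℝ^m × ℝ^n → ℝ∪{∞} be proper and lsc, with g lsc jointly. Let p^ν, p ∈ Δ, ξ^ν → ξ in ℝ^{sm}, θ^ν, λ^ν → ∞, θ^ν‖p^ν−p‖₂² → 0, λ^ν‖ξ^ν−ξ‖₂² → 0. Define f((u,v),x) = f₀(x) + Σᵢ (pᵢ+uᵢ) g(ξᵢ+vᵢ, x) + ι_{{0}}(u) + ι_{{0}}(v) and f^ν((u,v),x) = f₀(x) + Σᵢ (pᵢ^ν+uᵢ) g(ξᵢ^ν+vᵢ, x) + (θ^ν/2)‖u‖₂² + (λ^ν/2)‖v‖₂² + ι_Δ(p^ν+u). Then f^ν epi-converges to f. -/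
/-!
Liminf half: `f₀` and `g` are lower semicontinuous and the weighted sum is lower semicontinuous
jointly in weights and values (values are bounded below, so a weight tending to `0` against a
value `⊤` costs nothing), hence `liminf f^ν ≥ f₀(x) + Σᵢ (pᵢ+uᵢ) g(ξᵢ+vᵢ,x) + liminf penalty`.
The quadratic penalty is eventually nonnegative and blows up unless `(u,v) = (0,0)`.

Limsup half: at `(0,0)` the recovery sequence `u^ν = p − p^ν`, `v^ν = ξ − ξ^ν` moves the perturbed
data back to `(p, ξ)` at a penalty cost `(θ^ν‖p^ν−p‖² + λ^ν Σᵢ‖ξᵢ^ν−ξᵢ‖²)/2 → 0`; elsewhere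
`f = ∞` and constant sequences do.
-/

open Filter Topology
open scoped Classical

/-- Weighted sum `Σᵢ cᵢ aᵢ` of extended reals `aᵢ ∈ (−∞,∞]` with weights `cᵢ ∈ ℝ`, under the
conventions `0·∞ = 0` and `∞ − ∞ = ∞`. -/
noncomputable def wsumE {s : ℕ} (c : Fin s → ℝ) (a : Fin s → EReal) : EReal :=
  if ∃ i, c i ≠ 0 ∧ a i = ⊤ then ⊤ else ((∑ i, c i * (a i).toReal : ℝ) : EReal)

section WeightedSum

variable {s : ℕ} {c : Fin s → ℝ} {a : Fin s → EReal}

lemma wsumE_ne_bot : wsumE c a ≠ ⊥ := by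
  unfold wsumE
  split_ifs <;> simp

lemma coe_sum_mul_le_wsumE {b : Fin s → ℝ} (hc : ∀ i, 0 ≤ c i) (hb : ∀ i, (b i : EReal) ≤ a i) :
    ((∑ i, c i * b i : ℝ) : EReal) ≤ wsumE c a := by
  unfold wsumE
  split_ifs with htop
  · exact le_top
  push Not at htop
  refine EReal.coe_le_coe_iff.2 (Finset.sum_le_sum fun i _ => ?_)
  rcases eq_or_ne (c i) 0 with hci | hci
  · simp [hci]
  have hai : ((a i).toReal : EReal) = a i :=
    EReal.coe_toReal (htop i hci) ((EReal.bot_lt_coe (b i)).trans_le (hb i)).ne'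
  exact mul_le_mul_of_nonneg_left (EReal.coe_le_coe_iff.1 (hai ▸ hb i)) (hc i)

lemma exists_lt_sum_mul_of_lt_wsumE {β : ℝ} (hc : ∀ i, 0 ≤ c i) (ha : ∀ i, a i ≠ ⊥)
    (hβ : (β : EReal) < wsumE c a) :
    ∃ b : Fin s → ℝ, (∀ i, (b i : EReal) < a i) ∧ β < ∑ i, c i * b i := by
  have hb₀ : ∀ i, ∃ r : ℝ, (r : EReal) < a i := fun i =>
    (EReal.exists_between_coe_real (ha i).bot_lt).imp fun _ h => h.2
  choose b₀ hb₀ using hb₀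
  by_cases htop : ∃ i, c i ≠ 0 ∧ a i = ⊤
  · -- raise the lower bound at a coordinate where `c i * a i = ⊤`
    obtain ⟨i₀, hci₀, hai₀⟩ := htop
    set S := ∑ i, c i * b₀ i
    refine ⟨b₀ + Pi.single i₀ ((β - S + 1) / c i₀), fun i => ?_, ?_⟩
    · rcases eq_or_ne i i₀ with rfl | hi
      · exact hai₀ ▸ EReal.coe_lt_top _
      · simpa [Pi.single_apply, hi] using hb₀ i
    · simp only [Pi.add_apply, mul_add, Finset.sum_add_distrib, Pi.single_apply, mul_ite,
        mul_zero, Finset.sum_ite_eq', Finset.mem_univ, if_true]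
      rw [mul_div_cancel₀ _ hci₀]
      linarith
  · push Not at htop
    rw [wsumE, if_neg (by simpa using htop), EReal.coe_lt_coe_iff] at hβ
    set R := ∑ i, c i * (a i).toReal
    -- every coordinate drops by `δ`, so the weighted sum drops by `δ * ∑ c < R - β`
    set δ := (R - β) / (∑ i, c i + 1)
    have hcsum : 0 ≤ ∑ i, c i := Finset.sum_nonneg fun i _ => hc i
    have hδ : 0 < δ := div_pos (by linarith) (by linarith)
    have hδsum : δ * ∑ i, c i < R - β := by
      calc δ * ∑ i, c i < δ * (∑ i, c i + 1) := by nlinarith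
        _ = R - β := div_mul_cancel₀ _ (by linarith)
    refine ⟨fun i => if a i = ⊤ then b₀ i else (a i).toReal - δ, fun i => ?_, ?_⟩
    · dsimp only
      split_ifs with hai
      · exact hb₀ i
      · calc (((a i).toReal - δ : ℝ) : EReal) < ((a i).toReal : ℝ) :=
              EReal.coe_lt_coe_iff.2 (by linarith)
          _ = a i := EReal.coe_toReal hai (ha i)
    · have hterm : ∀ i, c i * (if a i = ⊤ then b₀ i else (a i).toReal - δ)
          = c i * (a i).toReal - c i * δ := fun i => by
        split_ifs with hai
        · simp [show c i = 0 by by_contra h; exact htop i h hai]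
        · ring
      simp only [hterm, Finset.sum_sub_distrib, ← Finset.sum_mul]
      linarith [mul_comm δ (∑ i, c i)]

theorem wsumE_le_liminf {α : Type*} {l : Filter α} {cν : α → Fin s → ℝ} {aν : α → Fin s → EReal}
    (ha : ∀ i, a i ≠ ⊥) (hc : Tendsto cν l (𝓝 c))
    (haν : ∀ i, a i ≤ liminf (fun t => aν t i) l) :
    wsumE c a ≤ liminf (fun t => if ∀ i, 0 ≤ cν t i then wsumE (cν t) (aν t) else ⊤) l := by
  refine (le_liminf_iff).2 fun β hβ => ?_
  by_cases hneg : ∃ i, c i < 0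
  · obtain ⟨i, hi⟩ := hneg
    filter_upwards [(tendsto_pi_nhds.1 hc i).eventually (eventually_lt_nhds hi)] with t ht
    rw [if_neg fun h => (h i).not_gt ht]
    exact hβ.trans_le le_top
  push Not at hneg
  obtain ⟨β', hββ', hβ'⟩ := EReal.exists_between_coe_real hβ
  obtain ⟨b, hba, hbβ⟩ := exists_lt_sum_mul_of_lt_wsumE hneg ha hβ'
  have hsum : Tendsto (fun t => ∑ i, cν t i * b i) l (𝓝 (∑ i, c i * b i)) :=
    tendsto_finsetSum _ fun i _ => (tendsto_pi_nhds.1 hc i).mul_const _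
  have hlb : ∀ᶠ t in l, ∀ i, (b i : EReal) < aν t i :=
    eventually_all.2 fun i => eventually_lt_of_lt_liminf ((hba i).trans_le (haν i))
  filter_upwards [hlb, hsum.eventually (eventually_gt_nhds hbβ)] with t hbt ht
  split_ifs with hcν
  · exact hββ'.trans ((EReal.coe_lt_coe_iff.2 ht).trans_le
      (coe_sum_mul_le_wsumE hcν fun i => (hbt i).le))
  · exact hβ.trans_le le_top

end WeightedSum

theorem LowerSemicontinuous.le_liminf_of_tendsto {α X γ : Type*} [TopologicalSpace X]
    [CompleteLinearOrder γ] {f : X → γ} (hf : LowerSemicontinuous f) {l : Filter α}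
    {x : α → X} {a : X} (hx : Tendsto x l (𝓝 a)) : f a ≤ liminf (fun t => f (x t)) l :=
  (le_liminf_iff).2 fun _ hy => hx.eventually (hf a _ hy)

lemma EReal.limsup_add_coe_le {α : Type*} {l : Filter α} [NeBot l] (T : EReal) {r : α → ℝ}
    (hr : Tendsto r l (𝓝 0)) : limsup (fun t => T + r t) l ≤ T := by
  rcases eq_or_ne T ⊤ with rfl | hT
  · exact le_top
  have hlim : limsup (fun t => (r t : EReal)) l = 0 := (EReal.tendsto_coe.2 hr).limsup_eq
  calc limsup (fun t => T + r t) l ≤ limsup (fun _ => T) l + limsup (fun t => (r t : EReal)) l :=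
        EReal.limsup_add_le (.inr (by simp [hlim])) (.inl (by simpa using hT))
    _ = T := by rw [limsup_const, hlim, add_zero]

section Convergence

variable {α E ι : Type*} [SeminormedAddCommGroup E] [Fintype ι] {l : Filter α}

lemma tendsto_zero_of_mul_tendsto_zero {θ r : α → ℝ} (hθ : Tendsto θ l atTop)
    (hr : ∀ t, 0 ≤ r t) (h : Tendsto (fun t => θ t * r t) l (𝓝 0)) : Tendsto r l (𝓝 0) :=
  squeeze_zero' (.of_forall hr)
    ((hθ.eventually_ge_atTop 1).mono fun t ht => le_mul_of_one_le_left (hr t) ht) h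

lemma tendsto_of_norm_sub_sq_tendsto_zero {x : α → E} {a : E}
    (h : Tendsto (fun t => ‖x t - a‖ ^ 2) l (𝓝 0)) : Tendsto x l (𝓝 a) :=
  tendsto_iff_norm_sub_tendsto_zero.2 <| by
    simpa [Real.sqrt_sq (norm_nonneg _)] using h.sqrt

lemma tendsto_pi_of_sum_norm_sub_sq_tendsto_zero {x : α → ι → E} {a : ι → E}
    (h : Tendsto (fun t => ∑ i, ‖x t i - a i‖ ^ 2) l (𝓝 0)) : Tendsto x l (𝓝 a) :=
  tendsto_pi_nhds.2 fun i => tendsto_of_norm_sub_sq_tendsto_zero <|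
    squeeze_zero (fun _ => sq_nonneg _)
      (fun t => Finset.single_le_sum (fun j _ => sq_nonneg ‖x t j - a j‖) (Finset.mem_univ i)) h

end Convergence

section Penalty

variable {α F E ι : Type*} [NormedAddCommGroup F] [NormedAddCommGroup E] [Fintype ι]
  {l : Filter α} {θ lam : α → ℝ}

noncomputable def penalty (θ lam : ℝ) (u : F) (v : ι → E) : ℝ :=
  θ / 2 * ‖u‖ ^ 2 + lam / 2 * ∑ i, ‖v i‖ ^ 2

lemma zero_le_liminf_penalty (hθ : Tendsto θ l atTop) (hlam : Tendsto lam l atTop)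
    (u : α → F) (v : α → ι → E) :
    0 ≤ liminf (fun t => (penalty (θ t) (lam t) (u t) (v t) : EReal)) l := by
  refine le_liminf_of_le (by isBoundedDefault) ?_
  filter_upwards [hθ.eventually_ge_atTop 0, hlam.eventually_ge_atTop 0] with t hθt hlamt
  exact EReal.coe_nonneg.2 (by unfold penalty; positivity)

lemma tendsto_penalty_atTop {u : α → F} {v : α → ι → E}
    {u₀ : F} {v₀ : ι → E} (hθ : Tendsto θ l atTop) (hlam : Tendsto lam l atTop)
    (hu : Tendsto u l (𝓝 u₀)) (hv : Tendsto v l (𝓝 v₀)) (h₀ : ¬(u₀ = 0 ∧ v₀ = 0)) :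
    Tendsto (fun t => penalty (θ t) (lam t) (u t) (v t)) l atTop := by
  have hθ' := hθ.atTop_div_const (two_pos (α := ℝ))
  have hlam' := hlam.atTop_div_const (two_pos (α := ℝ))
  have hunorm : Tendsto (fun t => ‖u t‖ ^ 2) l (𝓝 (‖u₀‖ ^ 2)) := hu.norm.pow 2
  have hvnorm : Tendsto (fun t => ∑ i, ‖v t i‖ ^ 2) l (𝓝 (∑ i, ‖v₀ i‖ ^ 2)) :=
    tendsto_finsetSum _ fun i _ => ((tendsto_pi_nhds.1 hv i).norm.pow 2)
  rcases not_and_or.1 h₀ with hu₀ | hv₀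
  · refine (hθ'.atTop_mul_pos (by positivity) hunorm).atTop_add_zero_eventuallyLE ?_
    filter_upwards [hlam.eventually_ge_atTop 0] with t ht
    positivity
  · obtain ⟨i, hi⟩ := Function.ne_iff.1 hv₀
    have hpos : 0 < ∑ i, ‖v₀ i‖ ^ 2 :=
      Finset.sum_pos' (fun _ _ => by positivity)
        ⟨i, Finset.mem_univ i, pow_pos (norm_pos_iff.2 hi) 2⟩
    refine Tendsto.zero_eventuallyLE_add_atTop ?_ (hlam'.atTop_mul_pos hpos hvnorm)
    filter_upwards [hθ.eventually_ge_atTop 0] with t ht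
    positivity

end Penalty

section Objective

variable {s : ℕ} {E X : Type*} [NormedAddCommGroup E]
  {f₀ : X → EReal} {g : E → X → EReal}

/-- The perturbed objective `f^ν((u,v),x)` at data `(p, ξ, θ, λ) = (p^ν, ξ^ν, θ^ν, λ^ν)`; the
indicator `ι_Δ(p + u)` is encoded by the value `⊤` off the simplex. -/
noncomputable def perturbedObjective (f₀ : X → EReal) (g : E → X → EReal)
    (p : EuclideanSpace ℝ (Fin s)) (ξ : Fin s → E) (θ lam : ℝ)
    (u : EuclideanSpace ℝ (Fin s)) (v : Fin s → E) (x : X) : EReal :=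
  if (∀ i, 0 ≤ p i + u i) ∧ ∑ i, (p i + u i) = 1 then
    f₀ x + wsumE (fun i => p i + u i) (fun i => g (ξ i + v i) x)
      + ((θ / 2 * ‖u‖ ^ 2 : ℝ) : EReal) + ((lam / 2 * ∑ i, ‖v i‖ ^ 2 : ℝ) : EReal)
  else ⊤

/-- The limit objective `f((u,v),x)`, with `ι_{0}(u) + ι_{0}(v)` encoded by the value `⊤`. -/
noncomputable def limitObjective [DecidableEq E] (f₀ : X → EReal) (g : E → X → EReal)
    (p : EuclideanSpace ℝ (Fin s)) (ξ : Fin s → E)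
    (u : EuclideanSpace ℝ (Fin s)) (v : Fin s → E) (x : X) : EReal :=
  if u = 0 ∧ v = 0 then f₀ x + wsumE (fun i => p i) (fun i => g (ξ i + v i) x) else ⊤

lemma add_penalty_le_perturbedObjective (p : EuclideanSpace ℝ (Fin s)) (ξ : Fin s → E) (θ lam : ℝ)
    (u : EuclideanSpace ℝ (Fin s)) (v : Fin s → E) (x : X) :
    f₀ x + (if ∀ i, 0 ≤ p i + u i then
        wsumE (fun i => p i + u i) (fun i => g (ξ i + v i) x) else ⊤)
      + (penalty θ lam u v : EReal) ≤ perturbedObjective f₀ g p ξ θ lam u v x := by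
  rw [perturbedObjective]
  by_cases hfeas : (∀ i, 0 ≤ p i + u i) ∧ ∑ i, (p i + u i) = 1
  · rw [if_pos hfeas, if_pos hfeas.1, penalty, EReal.coe_add, ← add_assoc]
  · rw [if_neg hfeas]
    exact le_top

theorem limitObjective_le_liminf_perturbedObjective [DecidableEq E] [TopologicalSpace X]
    {α : Type*} {l : Filter α}
    (hf₀ : ∀ x, f₀ x ≠ ⊥) (hf₀lsc : LowerSemicontinuous f₀) (hg : ∀ ξ x, g ξ x ≠ ⊥)
    (hglsc : LowerSemicontinuous (fun q : E × X => g q.1 q.2))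
    {p : EuclideanSpace ℝ (Fin s)} {pν : α → EuclideanSpace ℝ (Fin s)}
    (hpν : Tendsto pν l (𝓝 p))
    {ξ : Fin s → E} {ξν : α → Fin s → E} (hξν : Tendsto ξν l (𝓝 ξ))
    {θ lam : α → ℝ} (hθ : Tendsto θ l atTop) (hlam : Tendsto lam l atTop)
    {u : EuclideanSpace ℝ (Fin s)} {v : Fin s → E} {x : X}
    {useq : α → EuclideanSpace ℝ (Fin s)} {vseq : α → Fin s → E} {xseq : α → X}
    (hu : Tendsto useq l (𝓝 u)) (hv : Tendsto vseq l (𝓝 v)) (hx : Tendsto xseq l (𝓝 x)) :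
    limitObjective f₀ g p ξ u v x ≤ liminf (fun t =>
      perturbedObjective f₀ g (pν t) (ξν t) (θ t) (lam t) (useq t) (vseq t) (xseq t)) l := by
  have hweights : Tendsto (fun t i => pν t i + useq t i) l (𝓝 fun i => p i + u i) :=
    tendsto_pi_nhds.2 fun i =>
      ((PiLp.continuous_apply 2 _ i).tendsto p |>.comp hpν).add
        ((PiLp.continuous_apply 2 _ i).tendsto u |>.comp hu)
  have hgν : ∀ i, g (ξ i + v i) x ≤ liminf (fun t => g (ξν t i + vseq t i) (xseq t)) l :=
    fun i => hglsc.le_liminf_of_tendsto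
      (((tendsto_pi_nhds.1 hξν i).add (tendsto_pi_nhds.1 hv i)).prodMk_nhds hx)
  have hbound : f₀ x + wsumE (fun i => p i + u i) (fun i => g (ξ i + v i) x)
      + liminf (fun t => (penalty (θ t) (lam t) (useq t) (vseq t) : EReal)) l
      ≤ liminf (fun t =>
        perturbedObjective f₀ g (pν t) (ξν t) (θ t) (lam t) (useq t) (vseq t) (xseq t)) l :=
    calc _ ≤ _ := add_le_add (add_le_add (hf₀lsc.le_liminf_of_tendsto hx)
          (wsumE_le_liminf (fun i => hg _ _) hweights hgν)) le_rfl
      _ ≤ _ := (add_le_add EReal.le_liminf_add le_rfl).trans EReal.le_liminf_add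
      _ ≤ _ := liminf_le_liminf (.of_forall fun _ => add_penalty_le_perturbedObjective ..)
  unfold limitObjective
  split_ifs with h₀
  · obtain ⟨rfl, rfl⟩ := h₀
    simpa using (add_le_add le_rfl (zero_le_liminf_penalty hθ hlam useq vseq)).trans hbound
  · have htop : liminf (fun t => (penalty (θ t) (lam t) (useq t) (vseq t) : EReal)) l = ⊤ :=
      top_le_iff.1 <| (le_liminf_iff).2 fun y hy =>
        (EReal.tendsto_coe_atTop.comp (tendsto_penalty_atTop hθ hlam hu hv h₀)).eventually
          (eventually_gt_nhds hy)
    rwa [htop, EReal.add_top_of_ne_bot] at hbound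
    exact (EReal.add_eq_bot_iff.not.2 (not_or.2 ⟨hf₀ x, wsumE_ne_bot⟩))

lemma perturbedObjective_sub [DecidableEq E] {p : EuclideanSpace ℝ (Fin s)} {ξ : Fin s → E}
    (hp : (∀ i, 0 ≤ p i) ∧ ∑ i, p i = 1)
    (q : EuclideanSpace ℝ (Fin s)) (ζ : Fin s → E) (θ lam : ℝ) (x : X) :
    perturbedObjective f₀ g q ζ θ lam (p - q) (ξ - ζ) x
      = limitObjective f₀ g p ξ 0 0 x + penalty θ lam (p - q) (ξ - ζ) := by
  have hw : ∀ i, q i + (p - q) i = p i := fun i => by simp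
  rw [perturbedObjective, if_pos (by simpa only [hw] using hp), limitObjective,
    if_pos ⟨rfl, rfl⟩, penalty, EReal.coe_add, add_assoc]
  simp only [hw, Pi.sub_apply, add_sub_cancel, Pi.zero_apply, add_zero]

theorem exists_tendsto_limsup_perturbedObjective_le [DecidableEq E] [TopologicalSpace X]
    {α : Type*} {l : Filter α} [NeBot l] {p : EuclideanSpace ℝ (Fin s)}
    (hp : (∀ i, 0 ≤ p i) ∧ ∑ i, p i = 1)
    {pν : α → EuclideanSpace ℝ (Fin s)} (hpν : Tendsto pν l (𝓝 p))
    {ξ : Fin s → E} {ξν : α → Fin s → E} (hξν : Tendsto ξν l (𝓝 ξ)) {θ lam : α → ℝ}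
    (hθp : Tendsto (fun t => θ t * ‖pν t - p‖ ^ 2) l (𝓝 0))
    (hlamξ : Tendsto (fun t => lam t * ∑ i, ‖ξν t i - ξ i‖ ^ 2) l (𝓝 0))
    (u : EuclideanSpace ℝ (Fin s)) (v : Fin s → E) (x : X) :
    ∃ (useq : α → EuclideanSpace ℝ (Fin s)) (vseq : α → Fin s → E) (xseq : α → X),
      Tendsto useq l (𝓝 u) ∧ Tendsto vseq l (𝓝 v) ∧ Tendsto xseq l (𝓝 x) ∧
      limsup (fun t => perturbedObjective f₀ g (pν t) (ξν t) (θ t) (lam t)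
        (useq t) (vseq t) (xseq t)) l ≤ limitObjective f₀ g p ξ u v x := by
  by_cases h₀ : u = 0 ∧ v = 0
  swap
  · refine ⟨fun _ => u, fun _ => v, fun _ => x, tendsto_const_nhds, tendsto_const_nhds,
      tendsto_const_nhds, ?_⟩
    rw [limitObjective, if_neg h₀]
    exact le_top
  obtain ⟨rfl, rfl⟩ := h₀
  refine ⟨fun t => p - pν t, fun t => ξ - ξν t, fun _ => x,
    sub_self p ▸ tendsto_const_nhds.sub hpν, sub_self ξ ▸ tendsto_const_nhds.sub hξν,
    tendsto_const_nhds, ?_⟩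
  have hpen : Tendsto (fun t => penalty (θ t) (lam t) (p - pν t) (ξ - ξν t)) l (𝓝 0) := by
    refine ((hθp.add hlamξ).div_const 2).congr' (.of_forall fun t => ?_) |>.trans (by simp)
    simp only [penalty, Pi.sub_apply, norm_sub_rev p, norm_sub_rev (ξ _)]
    ring
  simp only [perturbedObjective_sub hp]
  exact EReal.limsup_add_coe_le _ hpen

end Objective

theorem stmt12_general {s m n : ℕ}
    (f₀ : EuclideanSpace ℝ (Fin n) → EReal)
    (g : EuclideanSpace ℝ (Fin m) → EuclideanSpace ℝ (Fin n) → EReal)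
    (hf₀proper : (∀ x, f₀ x ≠ ⊥) ∧ (∃ x, f₀ x ≠ ⊤)) (hf₀lsc : LowerSemicontinuous f₀)
    (hgproper : (∀ ξ x, g ξ x ≠ ⊥) ∧ (∃ ξ x, g ξ x ≠ ⊤))
    (hglsc : LowerSemicontinuous (fun q : EuclideanSpace ℝ (Fin m) × EuclideanSpace ℝ (Fin n)
      => g q.1 q.2))
    (p : EuclideanSpace ℝ (Fin s)) (hp : (∀ i, 0 ≤ p i) ∧ ∑ i, p i = 1)
    (pν : ℕ → EuclideanSpace ℝ (Fin s))
    (ξ : Fin s → EuclideanSpace ℝ (Fin m)) (ξν : ℕ → Fin s → EuclideanSpace ℝ (Fin m))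
    (θν lamν : ℕ → ℝ)
    (hθ : Tendsto θν atTop atTop) (hlam : Tendsto lamν atTop atTop)
    (hθp : Tendsto (fun ν => θν ν * ‖pν ν - p‖ ^ 2) atTop (𝓝 0))
    (hlamξ : Tendsto (fun ν => lamν ν * ∑ i, ‖ξν ν i - ξ i‖ ^ 2) atTop (𝓝 0)) :
    -- liminf condition of epi-convergence
    (∀ (u : EuclideanSpace ℝ (Fin s)) (v : Fin s → EuclideanSpace ℝ (Fin m))
       (x : EuclideanSpace ℝ (Fin n))
       (useq : ℕ → EuclideanSpace ℝ (Fin s)) (vseq : ℕ → Fin s → EuclideanSpace ℝ (Fin m))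
       (xseq : ℕ → EuclideanSpace ℝ (Fin n)),
       Tendsto useq atTop (𝓝 u) → Tendsto vseq atTop (𝓝 v) → Tendsto xseq atTop (𝓝 x) →
       (if u = 0 ∧ v = 0 then f₀ x + wsumE (fun i => p i) (fun i => g (ξ i + v i) x) else ⊤) ≤
         Filter.liminf (fun ν =>
           if (∀ i, 0 ≤ pν ν i + useq ν i) ∧ ∑ i, (pν ν i + useq ν i) = 1 then
             f₀ (xseq ν)
               + wsumE (fun i => pν ν i + useq ν i) (fun i => g (ξν ν i + vseq ν i) (xseq ν))
               + ((θν ν / 2 * ‖useq ν‖ ^ 2 : ℝ) : EReal)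
               + ((lamν ν / 2 * ∑ i, ‖vseq ν i‖ ^ 2 : ℝ) : EReal)
           else ⊤) atTop) ∧
    -- limsup (recovery sequence) condition of epi-convergence
    (∀ (u : EuclideanSpace ℝ (Fin s)) (v : Fin s → EuclideanSpace ℝ (Fin m))
       (x : EuclideanSpace ℝ (Fin n)),
       ∃ (useq : ℕ → EuclideanSpace ℝ (Fin s)) (vseq : ℕ → Fin s → EuclideanSpace ℝ (Fin m))
         (xseq : ℕ → EuclideanSpace ℝ (Fin n)),
         Tendsto useq atTop (𝓝 u) ∧ Tendsto vseq atTop (𝓝 v) ∧ Tendsto xseq atTop (𝓝 x) ∧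
         Filter.limsup (fun ν =>
           if (∀ i, 0 ≤ pν ν i + useq ν i) ∧ ∑ i, (pν ν i + useq ν i) = 1 then
             f₀ (xseq ν)
               + wsumE (fun i => pν ν i + useq ν i) (fun i => g (ξν ν i + vseq ν i) (xseq ν))
               + ((θν ν / 2 * ‖useq ν‖ ^ 2 : ℝ) : EReal)
               + ((lamν ν / 2 * ∑ i, ‖vseq ν i‖ ^ 2 : ℝ) : EReal)
           else ⊤) atTop ≤
         (if u = 0 ∧ v = 0 then f₀ x + wsumE (fun i => p i) (fun i => g (ξ i + v i) x)
          else ⊤)) := by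
  have hpν : Tendsto pν atTop (𝓝 p) := tendsto_of_norm_sub_sq_tendsto_zero <|
    tendsto_zero_of_mul_tendsto_zero hθ (fun _ => sq_nonneg _) hθp
  have hξν : Tendsto ξν atTop (𝓝 ξ) := tendsto_pi_of_sum_norm_sub_sq_tendsto_zero <|
    tendsto_zero_of_mul_tendsto_zero hlam (fun _ => Finset.sum_nonneg fun _ _ => sq_nonneg _)
      hlamξ
  exact ⟨fun _ _ _ _ _ _ hu hv hx => limitObjective_le_liminf_perturbedObjective hf₀proper.1
      hf₀lsc hgproper.1 hglsc hpν hξν hθ hlam hu hv hx,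
    exists_tendsto_limsup_perturbedObjective_le hp hpν hξν hθp hlamξ⟩

/-- Epi-convergence with probability *and* support perturbations: with
`f((u,v),x) = f₀(x) + Σᵢ(pᵢ+uᵢ)g(ξᵢ+vᵢ,x) + ι_{{0}}(u) + ι_{{0}}(v)` and
`f^ν((u,v),x) = f₀(x) + Σᵢ(pᵢ^ν+uᵢ)g(ξᵢ^ν+vᵢ,x) + (θ^ν/2)‖u‖₂² + (λ^ν/2)‖v‖₂² + ι_Δ(p^ν+u)`,
if `θ^ν,λ^ν → ∞`, `θ^ν‖p^ν−p‖₂² → 0` and `λ^ν‖ξ^ν−ξ‖₂² → 0`, then `f^ν` epi-converges to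
`f`. -/
theorem stmt12 {s m n : ℕ}
    (f₀ : EuclideanSpace ℝ (Fin n) → EReal)
    (g : EuclideanSpace ℝ (Fin m) → EuclideanSpace ℝ (Fin n) → EReal)
    (hf₀proper : (∀ x, f₀ x ≠ ⊥) ∧ (∃ x, f₀ x ≠ ⊤)) (hf₀lsc : LowerSemicontinuous f₀)
    (hgproper : (∀ ξ x, g ξ x ≠ ⊥) ∧ (∃ ξ x, g ξ x ≠ ⊤))
    (hglsc : LowerSemicontinuous (fun q : EuclideanSpace ℝ (Fin m) × EuclideanSpace ℝ (Fin n)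
      => g q.1 q.2))
    (p : EuclideanSpace ℝ (Fin s)) (hp : (∀ i, 0 ≤ p i) ∧ ∑ i, p i = 1)
    (pν : ℕ → EuclideanSpace ℝ (Fin s)) (hpν : ∀ ν, (∀ i, 0 ≤ pν ν i) ∧ ∑ i, pν ν i = 1)
    (ξ : Fin s → EuclideanSpace ℝ (Fin m)) (ξν : ℕ → Fin s → EuclideanSpace ℝ (Fin m))
    (θν lamν : ℕ → ℝ) (hθnn : ∀ ν, 0 ≤ θν ν) (hlamnn : ∀ ν, 0 ≤ lamν ν)
    (hθ : Tendsto θν atTop atTop) (hlam : Tendsto lamν atTop atTop)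
    (hθp : Tendsto (fun ν => θν ν * ‖pν ν - p‖ ^ 2) atTop (𝓝 0))
    (hlamξ : Tendsto (fun ν => lamν ν * ∑ i, ‖ξν ν i - ξ i‖ ^ 2) atTop (𝓝 0)) :
    -- liminf condition of epi-convergence
    (∀ (u : EuclideanSpace ℝ (Fin s)) (v : Fin s → EuclideanSpace ℝ (Fin m))
       (x : EuclideanSpace ℝ (Fin n))
       (useq : ℕ → EuclideanSpace ℝ (Fin s)) (vseq : ℕ → Fin s → EuclideanSpace ℝ (Fin m))
       (xseq : ℕ → EuclideanSpace ℝ (Fin n)),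
       Tendsto useq atTop (𝓝 u) → Tendsto vseq atTop (𝓝 v) → Tendsto xseq atTop (𝓝 x) →
       (if u = 0 ∧ v = 0 then f₀ x + wsumE (fun i => p i) (fun i => g (ξ i + v i) x) else ⊤) ≤
         Filter.liminf (fun ν =>
           if (∀ i, 0 ≤ pν ν i + useq ν i) ∧ ∑ i, (pν ν i + useq ν i) = 1 then
             f₀ (xseq ν)
               + wsumE (fun i => pν ν i + useq ν i) (fun i => g (ξν ν i + vseq ν i) (xseq ν))
               + ((θν ν / 2 * ‖useq ν‖ ^ 2 : ℝ) : EReal)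
               + ((lamν ν / 2 * ∑ i, ‖vseq ν i‖ ^ 2 : ℝ) : EReal)
           else ⊤) atTop) ∧
    -- limsup (recovery sequence) condition of epi-convergence
    (∀ (u : EuclideanSpace ℝ (Fin s)) (v : Fin s → EuclideanSpace ℝ (Fin m))
       (x : EuclideanSpace ℝ (Fin n)),
       ∃ (useq : ℕ → EuclideanSpace ℝ (Fin s)) (vseq : ℕ → Fin s → EuclideanSpace ℝ (Fin m))
         (xseq : ℕ → EuclideanSpace ℝ (Fin n)),
         Tendsto useq atTop (𝓝 u) ∧ Tendsto vseq atTop (𝓝 v) ∧ Tendsto xseq atTop (𝓝 x) ∧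
         Filter.limsup (fun ν =>
           if (∀ i, 0 ≤ pν ν i + useq ν i) ∧ ∑ i, (pν ν i + useq ν i) = 1 then
             f₀ (xseq ν)
               + wsumE (fun i => pν ν i + useq ν i) (fun i => g (ξν ν i + vseq ν i) (xseq ν))
               + ((θν ν / 2 * ‖useq ν‖ ^ 2 : ℝ) : EReal)
               + ((lamν ν / 2 * ∑ i, ‖vseq ν i‖ ^ 2 : ℝ) : EReal)
           else ⊤) atTop ≤
         (if u = 0 ∧ v = 0 then f₀ x + wsumE (fun i => p i) (fun i => g (ξ i + v i) x)
          else ⊤)) :=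
  stmt12_general f₀ g hf₀proper hf₀lsc hgproper hglsc p hp pν ξ ξν θν lamν hθ hlam hθp hlamξ
end

section
/- Let f₀, f₁, …, f_s be proper lsc with fᵢ(x̄) < ∞ for some x̄ and fᵢ ≥ −η for all i, let p, p^ν ∈ Δ with ‖p^ν − p‖₂ → 0 and θ ≥ 0. Define f(u,x) = f₀(x) + Σᵢ (pᵢ+uᵢ) fᵢ(x) + θ‖u‖₁ + ι_Δ(p+u) and f^ν(u,x) = f₀(x) + Σᵢ (pᵢ^ν+uᵢ) fᵢ(x) + θ‖u‖₁ + ι_Δ(p^ν+u). Then f^ν epi-converges to f for every θ ≥ 0. -/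
/-!
The simplex constraint and the weighted sum only see the weights `q = p + u`, so
`f(u,x) = g(p + u, x) + θ‖u‖₁` and `f^ν(u,x) = g(p^ν + u, x) + θ‖u‖₁` for the single function
`g(q,x) = f₀(x) + Σᵢ qᵢ fᵢ(x) + ι_Δ(q)`. The liminf inequality is lower semicontinuity of `g`
(on `Δ` the weights are nonnegative, and a continuous nonnegative weight times a bounded-below
lsc function is lsc) together with continuity of `θ‖u‖₁`. The recovery sequence is
`u^ν = u + p − p^ν`, `x^ν = x`, along which `p^ν + u^ν = p + u` stays fixed.
-/

open Filter Topology
open scoped Classical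

theorem EReal.sum_ne_bot {ι : Type*} {t : Finset ι} {f : ι → EReal} (h : ∀ i ∈ t, f i ≠ ⊥) :
    ∑ i ∈ t, f i ≠ ⊥ :=
  Finset.sum_induction f (· ≠ ⊥) (fun _ _ ha hb => EReal.add_ne_bot_iff.2 ⟨ha, hb⟩)
    EReal.zero_ne_bot h

theorem EReal.coe_mul_ne_bot {c : ℝ} (hc : 0 ≤ c) {a : EReal} (ha : a ≠ ⊥) :
    (c : EReal) * a ≠ ⊥ :=
  (EReal.mul_ne_bot _ _).2 ⟨.inl (EReal.coe_ne_bot c), .inr ha, .inl (EReal.coe_ne_top c),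
    .inl (EReal.coe_nonneg.2 hc)⟩

section LowerSemicontinuity

variable {X : Type*} [TopologicalSpace X]

theorem LowerSemicontinuous.ite_mem_top {γ : Type*} [Preorder γ] [OrderTop γ] {φ : X → γ}
    {S : Set X} (hφ : LowerSemicontinuous φ) (hS : IsClosed S) :
    LowerSemicontinuous fun z => if z ∈ S then φ z else ⊤ := by
  intro z y hy
  dsimp only at hy
  by_cases hz : z ∈ S
  · rw [if_pos hz] at hy
    filter_upwards [hφ z y hy] with z' hz'
    split_ifs
    exacts [hz', hz'.trans_le le_top]
  · rw [if_neg hz] at hy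
    filter_upwards [hS.isOpen_compl.mem_nhds hz] with z' hz'
    rwa [if_neg hz']

theorem lowerSemicontinuous_finset_sum_of_ne_bot {ι : Type*} (t : Finset ι)
    {f : ι → X → EReal} (hf : ∀ i ∈ t, LowerSemicontinuous (f i))
    (hbot : ∀ i ∈ t, ∀ z, f i z ≠ ⊥) : LowerSemicontinuous fun z => ∑ i ∈ t, f i z := by
  induction t using Finset.induction_on with
  | empty => simpa using lowerSemicontinuous_const
  | insert j t hj ih =>
    simp only [Finset.sum_insert hj]
    refine (hf j (t.mem_insert_self j)).add' (ih (fun i hi => hf i (t.mem_insert_of_mem hi))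
      fun i hi => hbot i (t.mem_insert_of_mem hi)) fun z => EReal.continuousAt_add ?_ ?_
    · exact .inr (EReal.sum_ne_bot fun i hi => hbot i (t.mem_insert_of_mem hi) z)
    · exact .inl (hbot j (t.mem_insert_self j) z)

theorem LowerSemicontinuous.coe_mul_of_continuous {c : X → ℝ} (hc : Continuous c)
    (hc₀ : ∀ z, 0 ≤ c z) {a : X → EReal} (ha : LowerSemicontinuous a) {m : ℝ}
    (ham : ∀ z, (m : EReal) ≤ a z) : LowerSemicontinuous fun z => (c z : EReal) * a z := by
  have hc' : ∀ z, 0 ≤ (c z : EReal) := fun z => EReal.coe_nonneg.2 (hc₀ z)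
  have hshift : LowerSemicontinuous fun z => a z - m :=
    ha.add' lowerSemicontinuous_const fun z =>
      EReal.continuousAt_add (.inr (by simp)) (.inr (by simp))
  -- `EReal.le_liminf_mul` needs nonnegative factors, hence the shift by `m`
  have hmul : LowerSemicontinuous fun z => (c z : EReal) * (a z - m) := by
    refine fun z => lowerSemicontinuousAt_iff_le_liminf.2 ?_
    have hcz : liminf (fun z => (c z : EReal)) (𝓝 z) = c z :=
      ((continuous_coe_real_ereal.comp hc).tendsto z).liminf_eq
    calc (c z : EReal) * (a z - m)
        ≤ liminf (fun z => (c z : EReal)) (𝓝 z) * liminf (fun z => a z - m) (𝓝 z) := by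
          rw [hcz]
          exact mul_le_mul_of_nonneg_left (hshift.lowerSemicontinuousAt z).le_liminf (hc' z)
      _ ≤ _ := EReal.le_liminf_mul (.of_forall hc') (.of_forall fun z => EReal.sub_nonneg
          (.inr (EReal.coe_ne_top m)) (.inr (EReal.coe_ne_bot m)) |>.2 (ham z))
  have hsplit : (fun z => (c z : EReal) * a z) = fun z => c z * (a z - m) + (c z * m : ℝ) := by
    funext z
    rw [EReal.mul_sub_of_nonneg_of_ne_top (hc' z) (EReal.coe_ne_top _), ← EReal.coe_mul,
      EReal.sub_add_cancel]
  rw [hsplit]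
  exact hmul.add' (continuous_coe_real_ereal.comp (hc.mul continuous_const)).lowerSemicontinuous
    fun z => EReal.continuousAt_add (.inr (EReal.coe_ne_bot _)) (.inr (EReal.coe_ne_top _))

end LowerSemicontinuity

theorem wsumE_eq_sum_mul {s : ℕ} {c : Fin s → ℝ} (hc : ∀ i, 0 ≤ c i) {a : Fin s → EReal}
    (ha : ∀ i, a i ≠ ⊥) : wsumE c a = ∑ i, (c i : EReal) * a i := by
  unfold wsumE
  split_ifs with h
  · obtain ⟨i, hci, hai⟩ := h
    rw [← Finset.add_sum_erase _ _ (Finset.mem_univ i), hai,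
      EReal.coe_mul_top_of_pos ((hc i).lt_of_ne' hci), EReal.top_add_of_ne_bot]
    exact EReal.sum_ne_bot fun j _ => EReal.coe_mul_ne_bot (hc j) (ha j)
  · push Not at h
    have hcoe := map_sum (⟨⟨Real.toEReal, EReal.coe_zero⟩, EReal.coe_add⟩ : ℝ →+ EReal)
      (fun i => c i * (a i).toReal) Finset.univ
    simp only [AddMonoidHom.coe_mk, ZeroHom.coe_mk] at hcoe
    rw [hcoe]
    refine Finset.sum_congr rfl fun i _ => ?_
    by_cases hci : c i = 0
    · simp [hci]
    · rw [← EReal.coe_toReal (h i hci) (ha i), EReal.toReal_coe, EReal.coe_mul]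

section SimplexObjective

variable {X : Type*} {s : ℕ} (f₀ : X → EReal) (F : Fin s → X → EReal)

/-- `f₀(x) + Σᵢ qᵢ Fᵢ(x) + ι_Δ(q)`; the functions `f` and `f^ν` of the statement are
`simplexObjective f₀ F (p + u) x + θ‖u‖₁` and the same with `p^ν` in place of `p`. -/
noncomputable def simplexObjective (q : Fin s → ℝ) (x : X) : EReal :=
  if (∀ i, 0 ≤ q i) ∧ ∑ i, q i = 1 then f₀ x + wsumE q (fun i => F i x) else ⊤

theorem simplexObjective_add_coe (q : Fin s → ℝ) (x : X) (r : ℝ) :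
    simplexObjective f₀ F q x + r =
      if (∀ i, 0 ≤ q i) ∧ ∑ i, q i = 1 then f₀ x + wsumE q (fun i => F i x) + r else ⊤ := by
  unfold simplexObjective
  split_ifs <;> simp

variable {f₀ F} [TopologicalSpace X]

theorem lowerSemicontinuous_simplexObjective (hf₀ : LowerSemicontinuous f₀)
    (hf₀_ne_bot : ∀ x, f₀ x ≠ ⊥) (hF : ∀ i, LowerSemicontinuous (F i)) {m : ℝ}
    (hFm : ∀ i x, (m : EReal) ≤ F i x) :
    LowerSemicontinuous fun z : (Fin s → ℝ) × X => simplexObjective f₀ F z.1 z.2 := by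
  have hF_ne_bot : ∀ i x, F i x ≠ ⊥ := fun i x =>
    ne_bot_of_le_ne_bot (EReal.coe_ne_bot m) (hFm i x)
  -- on `Δ` the weights equal their positive parts, which make every term lsc everywhere
  have hite : (fun z : (Fin s → ℝ) × X => simplexObjective f₀ F z.1 z.2) = fun z =>
      if z ∈ Prod.fst ⁻¹' stdSimplex ℝ (Fin s) then
        f₀ z.2 + ∑ i, ((max (z.1 i) 0 : ℝ) : EReal) * F i z.2 else ⊤ := by
    funext ⟨q, x⟩
    simp only [simplexObjective, Set.mem_preimage, stdSimplex, Set.mem_ofPred_eq]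
    split_ifs with hq
    · rw [wsumE_eq_sum_mul hq.1 fun i => hF_ne_bot i x]
      simp only [max_eq_left (hq.1 _)]
    · rfl
  rw [hite]
  refine LowerSemicontinuous.ite_mem_top ?_ ((isClosed_stdSimplex ℝ (Fin s)).preimage
    continuous_fst)
  have hterm_ne_bot : ∀ i (z : (Fin s → ℝ) × X), ((max (z.1 i) 0 : ℝ) : EReal) * F i z.2 ≠ ⊥ :=
    fun i z => EReal.coe_mul_ne_bot (le_max_right _ _) (hF_ne_bot i z.2)
  have hterm : ∀ i, LowerSemicontinuous fun z : (Fin s → ℝ) × X =>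
      ((max (z.1 i) 0 : ℝ) : EReal) * F i z.2 :=
    fun i => ((hF i).comp continuous_snd).coe_mul_of_continuous (by fun_prop)
      (fun _ => le_max_right _ _) fun z => hFm i z.2
  exact (hf₀.comp continuous_snd).add' (lowerSemicontinuous_finset_sum_of_ne_bot _
    (fun i _ => hterm i) fun i _ => hterm_ne_bot i) fun z => EReal.continuousAt_add
      (.inr (EReal.sum_ne_bot (t := .univ) fun i _ => hterm_ne_bot i z)) (.inl (hf₀_ne_bot z.2))

end SimplexObjective

section Sequences

variable {ι X : Type*} [TopologicalSpace X] {l : Filter ι} {r : ℝ} {rs : ι → ℝ}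

theorem LowerSemicontinuous.add_coe_le_liminf [l.NeBot] {g : X → EReal}
    (hg : LowerSemicontinuous g) {z : X} {zs : ι → X} (hz : Tendsto zs l (𝓝 z))
    (hr : Tendsto rs l (𝓝 r)) : g z + r ≤ liminf (fun i => g (zs i) + rs i) l :=
  calc g z + r ≤ liminf (g ∘ zs) l + liminf (fun i => (rs i : EReal)) l :=
        add_le_add ((hg.lowerSemicontinuousAt z).le_liminf.trans hz.liminf_le_liminf_comp)
          ((continuous_coe_real_ereal.tendsto r).comp hr).liminf_eq.ge
    _ ≤ _ := EReal.le_liminf_add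

theorem EReal.tendsto_const_add_coe (a : EReal) (hr : Tendsto rs l (𝓝 r)) :
    Tendsto (fun i => a + rs i) l (𝓝 (a + r)) :=
  (EReal.continuousAt_add (.inr (EReal.coe_ne_bot r)) (.inr (EReal.coe_ne_top r))).tendsto.comp
    (tendsto_const_nhds.prodMk_nhds ((continuous_coe_real_ereal.tendsto r).comp hr))

end Sequences

theorem stmt14_general {s n : ℕ}
    (f₀ : EuclideanSpace ℝ (Fin n) → EReal)
    (F : Fin s → EuclideanSpace ℝ (Fin n) → EReal)
    (hf₀proper : (∀ x, f₀ x ≠ ⊥) ∧ (∃ x, f₀ x ≠ ⊤)) (hf₀lsc : LowerSemicontinuous f₀)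
    (hFlsc : ∀ i, LowerSemicontinuous (F i))
    (η : ℝ)
    (hlb : (∀ x, -((η : ℝ) : EReal) ≤ f₀ x) ∧ ∀ i x, -((η : ℝ) : EReal) ≤ F i x)
    (p : EuclideanSpace ℝ (Fin s))
    (pν : ℕ → EuclideanSpace ℝ (Fin s))
    (hpconv : Tendsto (fun ν => ‖pν ν - p‖) atTop (𝓝 0))
    (θ : ℝ) :
    -- liminf condition of epi-convergence
    (∀ (u : EuclideanSpace ℝ (Fin s)) (x : EuclideanSpace ℝ (Fin n))
       (useq : ℕ → EuclideanSpace ℝ (Fin s)) (xseq : ℕ → EuclideanSpace ℝ (Fin n)),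
       Tendsto useq atTop (𝓝 u) → Tendsto xseq atTop (𝓝 x) →
       (if (∀ i, 0 ≤ p i + u i) ∧ ∑ i, (p i + u i) = 1 then
          f₀ x + wsumE (fun i => p i + u i) (fun i => F i x) + ((θ * ∑ i, |u i| : ℝ) : EReal)
        else ⊤) ≤
         Filter.liminf (fun ν =>
           if (∀ i, 0 ≤ pν ν i + useq ν i) ∧ ∑ i, (pν ν i + useq ν i) = 1 then
             f₀ (xseq ν) + wsumE (fun i => pν ν i + useq ν i) (fun i => F i (xseq ν))
               + ((θ * ∑ i, |useq ν i| : ℝ) : EReal)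
           else ⊤) atTop) ∧
    -- limsup (recovery sequence) condition of epi-convergence
    (∀ (u : EuclideanSpace ℝ (Fin s)) (x : EuclideanSpace ℝ (Fin n)),
       ∃ (useq : ℕ → EuclideanSpace ℝ (Fin s)) (xseq : ℕ → EuclideanSpace ℝ (Fin n)),
         Tendsto useq atTop (𝓝 u) ∧ Tendsto xseq atTop (𝓝 x) ∧
         Filter.limsup (fun ν =>
           if (∀ i, 0 ≤ pν ν i + useq ν i) ∧ ∑ i, (pν ν i + useq ν i) = 1 then
             f₀ (xseq ν) + wsumE (fun i => pν ν i + useq ν i) (fun i => F i (xseq ν))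
               + ((θ * ∑ i, |useq ν i| : ℝ) : EReal)
           else ⊤) atTop ≤
         (if (∀ i, 0 ≤ p i + u i) ∧ ∑ i, (p i + u i) = 1 then
            f₀ x + wsumE (fun i => p i + u i) (fun i => F i x)
              + ((θ * ∑ i, |u i| : ℝ) : EReal)
          else ⊤)) := by
  have hlsc := lowerSemicontinuous_simplexObjective hf₀lsc hf₀proper.1 hFlsc (m := -η)
    fun i x => by simpa using hlb.2 i x
  have hpt : Tendsto pν atTop (𝓝 p) := tendsto_iff_norm_sub_tendsto_zero.2 hpconv
  have hcoord : ∀ {v : ℕ → EuclideanSpace ℝ (Fin s)} {w} (i : Fin s),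
      Tendsto v atTop (𝓝 w) → Tendsto (fun ν => v ν i) atTop (𝓝 (w i)) :=
    fun i hv => ((PiLp.continuous_apply 2 _ i).tendsto _).comp hv
  have hℓ : Continuous fun v : EuclideanSpace ℝ (Fin s) => θ * ∑ i, |v i| := by fun_prop
  refine ⟨fun u x us xs hu hx => ?_, fun u x => ?_⟩
  · have hq : Tendsto (fun ν i => pν ν i + us ν i) atTop (𝓝 fun i => p i + u i) :=
      tendsto_pi_nhds.2 fun i => (hcoord i hpt).add (hcoord i hu)
    simpa only [simplexObjective_add_coe, Function.comp_def] using
      hlsc.add_coe_le_liminf (hq.prodMk_nhds hx) ((hℓ.tendsto u).comp hu)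
  · have hus : Tendsto (fun ν => u + (p - pν ν)) atTop (𝓝 u) := by
      simpa using (tendsto_const_nhds (x := u)).add ((tendsto_const_nhds (x := p)).sub hpt)
    have hweights : ∀ ν i, pν ν i + (u + (p - pν ν)) i = p i + u i := fun ν i => by simp; ring
    refine ⟨_, fun _ => x, hus, tendsto_const_nhds, ?_⟩
    simpa only [simplexObjective_add_coe, hweights, Function.comp_def] using
      (EReal.tendsto_const_add_coe (simplexObjective f₀ F (fun i => p i + u i) x)
        ((hℓ.tendsto u).comp hus)).limsup_eq.le

/-- With `f(u,x) = f₀(x) + Σᵢ(pᵢ+uᵢ)fᵢ(x) + θ‖u‖₁ + ι_Δ(p+u)` and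
`f^ν(u,x) = f₀(x) + Σᵢ(pᵢ^ν+uᵢ)fᵢ(x) + θ‖u‖₁ + ι_Δ(p^ν+u)`, if `‖p^ν − p‖₂ → 0` then `f^ν`
epi-converges to `f`, for every `θ ≥ 0`. -/
theorem stmt14 {s n : ℕ}
    (f₀ : EuclideanSpace ℝ (Fin n) → EReal)
    (F : Fin s → EuclideanSpace ℝ (Fin n) → EReal)
    (hf₀proper : (∀ x, f₀ x ≠ ⊥) ∧ (∃ x, f₀ x ≠ ⊤)) (hf₀lsc : LowerSemicontinuous f₀)
    (hFproper : ∀ i, (∀ x, F i x ≠ ⊥) ∧ (∃ x, F i x ≠ ⊤))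
    (hFlsc : ∀ i, LowerSemicontinuous (F i))
    (η : ℝ) (hη : 0 ≤ η)
    (xb : EuclideanSpace ℝ (Fin n)) (hfinb : f₀ xb ≠ ⊤ ∧ ∀ i, F i xb ≠ ⊤)
    (hlb : (∀ x, -((η : ℝ) : EReal) ≤ f₀ x) ∧ ∀ i x, -((η : ℝ) : EReal) ≤ F i x)
    (p : EuclideanSpace ℝ (Fin s)) (hp : (∀ i, 0 ≤ p i) ∧ ∑ i, p i = 1)
    (pν : ℕ → EuclideanSpace ℝ (Fin s)) (hpν : ∀ ν, (∀ i, 0 ≤ pν ν i) ∧ ∑ i, pν ν i = 1)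
    (hpconv : Tendsto (fun ν => ‖pν ν - p‖) atTop (𝓝 0))
    (θ : ℝ) (hθ : 0 ≤ θ) :
    -- liminf condition of epi-convergence
    (∀ (u : EuclideanSpace ℝ (Fin s)) (x : EuclideanSpace ℝ (Fin n))
       (useq : ℕ → EuclideanSpace ℝ (Fin s)) (xseq : ℕ → EuclideanSpace ℝ (Fin n)),
       Tendsto useq atTop (𝓝 u) → Tendsto xseq atTop (𝓝 x) →
       (if (∀ i, 0 ≤ p i + u i) ∧ ∑ i, (p i + u i) = 1 then
          f₀ x + wsumE (fun i => p i + u i) (fun i => F i x) + ((θ * ∑ i, |u i| : ℝ) : EReal)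
        else ⊤) ≤
         Filter.liminf (fun ν =>
           if (∀ i, 0 ≤ pν ν i + useq ν i) ∧ ∑ i, (pν ν i + useq ν i) = 1 then
             f₀ (xseq ν) + wsumE (fun i => pν ν i + useq ν i) (fun i => F i (xseq ν))
               + ((θ * ∑ i, |useq ν i| : ℝ) : EReal)
           else ⊤) atTop) ∧
    -- limsup (recovery sequence) condition of epi-convergence
    (∀ (u : EuclideanSpace ℝ (Fin s)) (x : EuclideanSpace ℝ (Fin n)),
       ∃ (useq : ℕ → EuclideanSpace ℝ (Fin s)) (xseq : ℕ → EuclideanSpace ℝ (Fin n)),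
         Tendsto useq atTop (𝓝 u) ∧ Tendsto xseq atTop (𝓝 x) ∧
         Filter.limsup (fun ν =>
           if (∀ i, 0 ≤ pν ν i + useq ν i) ∧ ∑ i, (pν ν i + useq ν i) = 1 then
             f₀ (xseq ν) + wsumE (fun i => pν ν i + useq ν i) (fun i => F i (xseq ν))
               + ((θ * ∑ i, |useq ν i| : ℝ) : EReal)
           else ⊤) atTop ≤
         (if (∀ i, 0 ≤ p i + u i) ∧ ∑ i, (p i + u i) = 1 then
            f₀ x + wsumE (fun i => p i + u i) (fun i => F i x)
              + ((θ * ∑ i, |u i| : ℝ) : EReal)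
          else ⊤)) :=
  stmt14_general f₀ F hf₀proper hf₀lsc hFlsc η hlb p pν hpconv θ
end

section
/- Let f₀ : ℝ^n → ℝ∪{∞} and h : ℝ^m → ℝ∪{∞} be proper lsc, each Gᵢ : ℝ^n → ℝ^m continuous, p, p^ν ∈ Δ, θ^ν → ∞, θ^ν‖p^ν−p‖₂² → 0. Define f(u,x) = f₀(x) + h(u + Σᵢ pᵢGᵢ(x)) + ι_{{0}}(u) and f^ν(u,x) = f₀(x) + h(u + Σᵢ pᵢ^νGᵢ(x)) + (θ^ν/2)‖u‖₂². Then f^ν epi-converges to f on ℝ^m × ℝ^n. -/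
/-!
Write `Φ (x, w) = f₀ x + h w`, which is lower semicontinuous because neither summand takes the
value `⊥`, so that `f^ν (u, x) = Φ (x, u + Σᵢ pᵢ^ν Gᵢ x) + (θ^ν/2)‖u‖²`. Since `θ^ν → ∞`, the
hypothesis `θ^ν ‖p^ν − p‖² → 0` forces `p^ν → p`, so along converging `(u^ν, x^ν)` the argument
of `Φ` converges too and the liminf inequality is lower semicontinuity of `Φ`; when `u ≠ 0` the
penalty diverges while `Φ` stays bounded below. For recovery at `u = 0` take `x^ν = x` and
`u^ν = Σᵢ (pᵢ − pᵢ^ν) Gᵢ x`, which keeps the argument of `h` fixed; by Cauchy–Schwarz the penalty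
is at most `(θ^ν/2) ‖p^ν − p‖² Σᵢ ‖Gᵢ x‖² → 0`.
-/

open Filter Topology
open scoped Classical

section Semicontinuity

variable {ι X Y : Type*} [TopologicalSpace X] [TopologicalSpace Y] {l : Filter ι}

theorem LowerSemicontinuous.ereal_add_prod {f : X → EReal} {g : Y → EReal}
    (hf : LowerSemicontinuous f) (hg : LowerSemicontinuous g) (hf_bot : ∀ x, f x ≠ ⊥)
    (hg_bot : ∀ y, g y ≠ ⊥) : LowerSemicontinuous fun z : X × Y => f z.1 + g z.2 :=
  (hf.comp continuous_fst).add' (hg.comp continuous_snd) fun z =>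
    EReal.continuousAt_add (Or.inr (hg_bot z.2)) (Or.inl (hf_bot z.1))

theorem LowerSemicontinuousAt.le_liminf_add_of_eventually_nonneg {F : X → EReal} {x : X}
    (hF : LowerSemicontinuousAt F x) {y : ι → X} (hy : Tendsto y l (𝓝 x)) {r : ι → ℝ}
    (hr : ∀ᶠ ν in l, 0 ≤ r ν) : F x ≤ liminf (fun ν => F (y ν) + r ν) l :=
  calc F x ≤ liminf F (𝓝 x) := hF.le_liminf
    _ ≤ liminf (F ∘ y) l := hy.liminf_le_liminf_comp
    _ ≤ _ := liminf_le_liminf (hr.mono fun _ hν => le_add_of_nonneg_right (EReal.coe_nonneg.2 hν))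

theorem LowerSemicontinuousAt.tendsto_add_atTop {F : X → EReal} {x : X}
    (hF : LowerSemicontinuousAt F x) (hFx : F x ≠ ⊥) {y : ι → X} (hy : Tendsto y l (𝓝 x))
    {r : ι → ℝ} (hr : Tendsto r l atTop) : Tendsto (fun ν => F (y ν) + r ν) l (𝓝 ⊤) := by
  obtain ⟨c, -, hc⟩ := EReal.exists_between_coe_real hFx.bot_lt
  refine EReal.tendsto_nhds_top_iff_real.2 fun d => ?_
  filter_upwards [hy.eventually (hF c hc), hr.eventually_gt_atTop (d - c)] with ν hFν hrν
  calc (d : EReal) = c + (d - c : ℝ) := by norm_cast; ring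
    _ < F (y ν) + r ν := EReal.add_lt_add hFν (EReal.coe_lt_coe_iff.2 hrν)

theorem EReal.tendsto_add_coe_of_tendsto_zero {C : EReal} (hC : C ≠ ⊥) {q : ι → ℝ}
    (hq : Tendsto q l (𝓝 0)) : Tendsto (fun ν => C + q ν) l (𝓝 C) := by
  have hadd := (EReal.continuousAt_add (p := (C, 0)) (Or.inr (by simp)) (Or.inl hC)).tendsto
  rw [show C + 0 = C from add_zero C] at hadd
  exact hadd.comp (tendsto_const_nhds.prodMk_nhds (EReal.tendsto_coe.2 hq))

end Semicontinuity

section Weights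

variable {ι κ : Type*} {l : Filter ι}

theorem Filter.Tendsto.tendsto_zero_of_mul {θ S : ι → ℝ} (hθ : Tendsto θ l atTop)
    (hθS : Tendsto (fun ν => θ ν * S ν) l (𝓝 0)) : Tendsto S l (𝓝 0) := by
  have h := hθS.mul (tendsto_inv_atTop_zero.comp hθ)
  rw [zero_mul] at h
  refine h.congr' ?_
  filter_upwards [hθ.eventually_gt_atTop 0] with ν hν
  simp only [Function.comp_apply]
  field_simp

theorem tendsto_pi_nhds_of_tendsto_sum_sq_sub [Fintype κ] {a : ι → κ → ℝ} {b : κ → ℝ}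
    (h : Tendsto (fun ν => ∑ i, (a ν i - b i) ^ 2) l (𝓝 0)) : Tendsto a l (𝓝 b) := by
  refine tendsto_pi_nhds.2 fun i => tendsto_iff_dist_tendsto_zero.2 ?_
  have hsq : Tendsto (fun ν => dist (a ν i) (b i) ^ 2) l (𝓝 0) :=
    squeeze_zero (fun _ => sq_nonneg _) (fun ν => by
      rw [Real.dist_eq, sq_abs]
      exact Finset.single_le_sum (f := fun j => (a ν j - b j) ^ 2) (fun j _ => sq_nonneg _)
        (Finset.mem_univ i)) h
  simpa [Real.sqrt_sq dist_nonneg] using hsq.sqrt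

theorem Filter.Tendsto.sum_smul_apply {E F : Type*} [TopologicalSpace E] [TopologicalSpace F]
    [AddCommMonoid F] [ContinuousAdd F] [Module ℝ F] [ContinuousSMul ℝ F] [Fintype κ]
    {a : ι → κ → ℝ} {b : κ → ℝ} (ha : Tendsto a l (𝓝 b)) {g : κ → E → F}
    (hg : ∀ i, Continuous (g i)) {y : ι → E} {x : E} (hy : Tendsto y l (𝓝 x)) :
    Tendsto (fun ν => ∑ i, a ν i • g i (y ν)) l (𝓝 (∑ i, b i • g i x)) :=
  tendsto_finsetSum _ fun i _ => (tendsto_pi_nhds.1 ha i).smul ((hg i).continuousAt.tendsto.comp hy)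

variable {E : Type*} [SeminormedAddCommGroup E] [NormedSpace ℝ E]

theorem sq_norm_sum_smul_le (s : Finset κ) (c : κ → ℝ) (v : κ → E) :
    ‖∑ i ∈ s, c i • v i‖ ^ 2 ≤ (∑ i ∈ s, c i ^ 2) * ∑ i ∈ s, ‖v i‖ ^ 2 :=
  calc ‖∑ i ∈ s, c i • v i‖ ^ 2 ≤ (∑ i ∈ s, |c i| * ‖v i‖) ^ 2 := by
        gcongr
        exact (norm_sum_le _ _).trans_eq (by simp [norm_smul])
    _ ≤ (∑ i ∈ s, |c i| ^ 2) * ∑ i ∈ s, ‖v i‖ ^ 2 := Finset.sum_mul_sq_le_sq_mul_sq _ _ _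
    _ = _ := by simp only [sq_abs]

theorem tendsto_mul_sq_norm_sum_sub_smul [Fintype κ] {θ : ι → ℝ} {a : ι → κ → ℝ} {b : κ → ℝ}
    (v : κ → E) (hθ : ∀ᶠ ν in l, 0 ≤ θ ν)
    (h : Tendsto (fun ν => θ ν * ∑ i, (a ν i - b i) ^ 2) l (𝓝 0)) :
    Tendsto (fun ν => θ ν * ‖∑ i, (b i - a ν i) • v i‖ ^ 2) l (𝓝 0) := by
  have hbound := h.mul_const (∑ i, ‖v i‖ ^ 2)
  rw [zero_mul] at hbound
  refine squeeze_zero' (hθ.mono fun ν hν => by positivity) (hθ.mono fun ν hν => ?_) hbound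
  calc θ ν * ‖∑ i, (b i - a ν i) • v i‖ ^ 2
      ≤ θ ν * ((∑ i, (b i - a ν i) ^ 2) * ∑ i, ‖v i‖ ^ 2) :=
        mul_le_mul_of_nonneg_left (sq_norm_sum_smul_le _ _ _) hν
    _ = θ ν * (∑ i, (a ν i - b i) ^ 2) * ∑ i, ‖v i‖ ^ 2 := by
        simp only [sub_sq_comm (b _)]; ring

end Weights

theorem stmt15_general {s m n : ℕ}
    (f₀ : EuclideanSpace ℝ (Fin n) → EReal)
    (h : EuclideanSpace ℝ (Fin m) → EReal)
    (G : Fin s → EuclideanSpace ℝ (Fin n) → EuclideanSpace ℝ (Fin m))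
    (hf₀proper : (∀ x, f₀ x ≠ ⊥) ∧ (∃ x, f₀ x ≠ ⊤)) (hf₀lsc : LowerSemicontinuous f₀)
    (hhproper : (∀ v, h v ≠ ⊥) ∧ (∃ v, h v ≠ ⊤)) (hhlsc : LowerSemicontinuous h)
    (hG : ∀ i, Continuous (G i))
    (p : Fin s → ℝ)
    (pν : ℕ → Fin s → ℝ)
    (θν : ℕ → ℝ)
    (hθ : Tendsto θν atTop atTop)
    (hθp : Tendsto (fun ν => θν ν * Real.sqrt (∑ i, (pν ν i - p i) ^ 2) ^ 2) atTop (𝓝 0)) :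
    -- liminf condition of epi-convergence
    (∀ (u : EuclideanSpace ℝ (Fin m)) (x : EuclideanSpace ℝ (Fin n))
       (useq : ℕ → EuclideanSpace ℝ (Fin m)) (xseq : ℕ → EuclideanSpace ℝ (Fin n)),
       Tendsto useq atTop (𝓝 u) → Tendsto xseq atTop (𝓝 x) →
       (if u = 0 then f₀ x + h (u + ∑ i, p i • G i x) else ⊤) ≤
         Filter.liminf (fun ν =>
           f₀ (xseq ν) + h (useq ν + ∑ i, pν ν i • G i (xseq ν))
             + ((θν ν / 2 * ‖useq ν‖ ^ 2 : ℝ) : EReal)) atTop) ∧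
    -- limsup (recovery sequence) condition of epi-convergence
    (∀ (u : EuclideanSpace ℝ (Fin m)) (x : EuclideanSpace ℝ (Fin n)),
       ∃ (useq : ℕ → EuclideanSpace ℝ (Fin m)) (xseq : ℕ → EuclideanSpace ℝ (Fin n)),
         Tendsto useq atTop (𝓝 u) ∧ Tendsto xseq atTop (𝓝 x) ∧
         Filter.limsup (fun ν =>
           f₀ (xseq ν) + h (useq ν + ∑ i, pν ν i • G i (xseq ν))
             + ((θν ν / 2 * ‖useq ν‖ ^ 2 : ℝ) : EReal)) atTop ≤
         (if u = 0 then f₀ x + h (u + ∑ i, p i • G i x) else ⊤)) := by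
  have hθS : Tendsto (fun ν => θν ν * ∑ i, (pν ν i - p i) ^ 2) atTop (𝓝 0) :=
    hθp.congr fun ν => by rw [Real.sq_sqrt (Finset.sum_nonneg fun i _ => sq_nonneg _)]
  have hpν : Tendsto pν atTop (𝓝 p) :=
    tendsto_pi_nhds_of_tendsto_sum_sq_sub (hθ.tendsto_zero_of_mul hθS)
  have hΦ := hf₀lsc.ereal_add_prod hhlsc hf₀proper.1 hhproper.1
  have hΦ_bot : ∀ x w, f₀ x + h w ≠ ⊥ := fun x w =>
    EReal.add_ne_bot_iff.2 ⟨hf₀proper.1 x, hhproper.1 w⟩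
  refine ⟨fun u x useq xseq hu hx => ?_, fun u x => ?_⟩
  · have hy : Tendsto (fun ν => (xseq ν, useq ν + ∑ i, pν ν i • G i (xseq ν))) atTop
        (𝓝 (x, u + ∑ i, p i • G i x)) := hx.prodMk_nhds (hu.add (hpν.sum_smul_apply hG hx))
    split_ifs with hu0
    · refine (hΦ.lowerSemicontinuousAt _).le_liminf_add_of_eventually_nonneg hy ?_
      filter_upwards [hθ.eventually_ge_atTop 0] with ν hν using by positivity
    · have hr : Tendsto (fun ν => θν ν / 2 * ‖useq ν‖ ^ 2) atTop atTop :=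
        (hθ.atTop_div_const two_pos).atTop_mul_pos (by positivity) (hu.norm.pow 2)
      rw [((hΦ.lowerSemicontinuousAt _).tendsto_add_atTop (hΦ_bot _ _) hy hr).liminf_eq]
  · split_ifs with hu0
    · subst hu0
      refine ⟨fun ν => ∑ i, (p i - pν ν i) • G i x, fun _ => x, ?_, tendsto_const_nhds, ?_⟩
      · simpa using ((tendsto_const_nhds (x := p)).sub hpν).sum_smul_apply hG (tendsto_const_nhds (x := x))
      · have hu_add : ∀ ν, ∑ i, (p i - pν ν i) • G i x + ∑ i, pν ν i • G i x
            = 0 + ∑ i, p i • G i x := fun ν => by simp [sub_smul]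
        have hpen := (tendsto_mul_sq_norm_sum_sub_smul (fun i => G i x)
          (hθ.eventually_ge_atTop 0) hθS).div_const 2
        simp only [hu_add]
        refine (EReal.tendsto_add_coe_of_tendsto_zero (hΦ_bot _ _) ?_).limsup_eq.le
        simpa [mul_div_right_comm] using hpen
    · exact ⟨fun _ => u, fun _ => x, tendsto_const_nhds, tendsto_const_nhds, le_top⟩

/-- Composite setting. With
`f(u,x) = f₀(x) + h(u + Σᵢ pᵢGᵢ(x)) + ι_{{0}}(u)` and
`f^ν(u,x) = f₀(x) + h(u + Σᵢ pᵢ^νGᵢ(x)) + (θ^ν/2)‖u‖₂²`, if `θ^ν → ∞` and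
`θ^ν‖p^ν − p‖₂² → 0`, then `f^ν` epi-converges to `f` on `ℝ^m × ℝ^n`. -/
theorem stmt15 {s m n : ℕ}
    (f₀ : EuclideanSpace ℝ (Fin n) → EReal)
    (h : EuclideanSpace ℝ (Fin m) → EReal)
    (G : Fin s → EuclideanSpace ℝ (Fin n) → EuclideanSpace ℝ (Fin m))
    (hf₀proper : (∀ x, f₀ x ≠ ⊥) ∧ (∃ x, f₀ x ≠ ⊤)) (hf₀lsc : LowerSemicontinuous f₀)
    (hhproper : (∀ v, h v ≠ ⊥) ∧ (∃ v, h v ≠ ⊤)) (hhlsc : LowerSemicontinuous h)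
    (hG : ∀ i, Continuous (G i))
    (p : Fin s → ℝ) (hp : (∀ i, 0 ≤ p i) ∧ ∑ i, p i = 1)
    (pν : ℕ → Fin s → ℝ) (hpν : ∀ ν, (∀ i, 0 ≤ pν ν i) ∧ ∑ i, pν ν i = 1)
    (θν : ℕ → ℝ) (hθnn : ∀ ν, 0 ≤ θν ν)
    (hθ : Tendsto θν atTop atTop)
    (hθp : Tendsto (fun ν => θν ν * Real.sqrt (∑ i, (pν ν i - p i) ^ 2) ^ 2) atTop (𝓝 0)) :
    -- liminf condition of epi-convergence
    (∀ (u : EuclideanSpace ℝ (Fin m)) (x : EuclideanSpace ℝ (Fin n))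
       (useq : ℕ → EuclideanSpace ℝ (Fin m)) (xseq : ℕ → EuclideanSpace ℝ (Fin n)),
       Tendsto useq atTop (𝓝 u) → Tendsto xseq atTop (𝓝 x) →
       (if u = 0 then f₀ x + h (u + ∑ i, p i • G i x) else ⊤) ≤
         Filter.liminf (fun ν =>
           f₀ (xseq ν) + h (useq ν + ∑ i, pν ν i • G i (xseq ν))
             + ((θν ν / 2 * ‖useq ν‖ ^ 2 : ℝ) : EReal)) atTop) ∧
    -- limsup (recovery sequence) condition of epi-convergence
    (∀ (u : EuclideanSpace ℝ (Fin m)) (x : EuclideanSpace ℝ (Fin n)),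
       ∃ (useq : ℕ → EuclideanSpace ℝ (Fin m)) (xseq : ℕ → EuclideanSpace ℝ (Fin n)),
         Tendsto useq atTop (𝓝 u) ∧ Tendsto xseq atTop (𝓝 x) ∧
         Filter.limsup (fun ν =>
           f₀ (xseq ν) + h (useq ν + ∑ i, pν ν i • G i (xseq ν))
             + ((θν ν / 2 * ‖useq ν‖ ^ 2 : ℝ) : EReal)) atTop ≤
         (if u = 0 then f₀ x + h (u + ∑ i, p i • G i x) else ⊤)) :=
  stmt15_general f₀ h G hf₀proper hf₀lsc hhproper hhlsc hG p pν θν hθ hθp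
end
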